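/- arXiv:2210.12243 — 6 statements merged into one kernel-verified Lean document; each statement's English description precedes it below -/
import Mathlib

section
/- For every real α > 1/2 there exist constants ξ > 0, β > 0 and c > 0 such that for every sufficiently large integer n the following holds: let G be a graph on n vertices with an edge coloring F = F_M ⊔ F_E, where every color class in F_M is a matching of size 2, every color class in F_E is a single edge, |F_M| ≥ (α − ξ)·n, and |F_E| ≥ (1 − α − ξ)·n. Then there exists a subset S of V(G) with |S| ≤ β·n such that the induced subgraph G[S] contains a rainbow edge set of size at least (β + c)·n. -/
open Finset SimpleGraph
open scoped Classical

/-- A matching of size 2: a set of two edges sharing no vertex. -/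
def IsMatching2 {V : Type*} (M : Finset (Sym2 V)) : Prop :=
  M.card = 2 ∧ ∀ e₁ ∈ M, ∀ e₂ ∈ M, e₁ ≠ e₂ → ∀ v : V, v ∈ e₁ → v ∉ e₂

/-- A triangle class: the set of the three edges spanned by a triangle of `G`. -/
def IsTriangleClass {V : Type*} (G : SimpleGraph V) (T : Finset (Sym2 V)) : Prop :=
  ∃ a b c : V, G.Adj a b ∧ G.Adj a c ∧ G.Adj b c ∧
    T = {s(a, b), s(a, c), s(b, c)}

/-- An edge coloring of `G`: a family of nonempty pairwise disjoint sets of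
edges of `G` whose union is the edge set of `G`. -/
def IsEdgeColoring {V : Type*} {ι : Type*} (G : SimpleGraph V)
    (F : ι → Finset (Sym2 V)) : Prop :=
  (∀ i, (F i).Nonempty) ∧ (∀ i j : ι, i ≠ j → Disjoint (F i) (F j)) ∧
    (∀ i, (F i : Set (Sym2 V)) ⊆ G.edgeSet) ∧ (∀ e ∈ G.edgeSet, ∃ i, e ∈ F i)

/-- A closed walk is rainbow (w.r.t. the coloring `F`) if its edges lie in
pairwise distinct color classes. -/
def IsRainbow {V : Type*} {ι : Type*} {G : SimpleGraph V} (F : ι → Finset (Sym2 V))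
    {u : V} (w : G.Walk u u) : Prop :=
  ∀ i : ι, ∀ e₁ ∈ w.edges, ∀ e₂ ∈ w.edges, e₁ ∈ F i → e₂ ∈ F i → e₁ = e₂


open Function

/-!
Delete a uniformly random set `T` of `k ≈ γn` vertices and keep `S = V \ T`. A single-edge class
loses all its edges with probability at most `2k/n`, a matching class only if both of its edges
meet `T`, which happens with probability at most `4(k/n)²`. One surviving edge from each surviving
class is a rainbow set inside `S`, and since more than half of the classes are matchings, the
expected number of survivors exceeds `|S| = n - k` by a constant multiple of `γ²n`.
-/

section KSubsets

variable {V : Type*} [Fintype V]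

theorem card_filter_subset_powersetCard_univ_mul_choose {A : Finset V} {k : ℕ} (hAk : #A ≤ k) :
    #{T ∈ powersetCard k univ | A ⊆ T} * (Fintype.card V).choose #A =
      (Fintype.card V).choose k * k.choose #A := by
  rw [card_filter_powersetCard_subset A univ k (subset_univ A) hAk, card_univ,
    Nat.choose_mul hAk, mul_comm]

theorem card_filter_mem_powersetCard_univ (v : V) {k : ℕ} (hk : 1 ≤ k) :
    (#{T ∈ powersetCard k univ | v ∈ T} : ℝ) =
      k / Fintype.card V * (Fintype.card V).choose k := by
  have h := card_filter_subset_powersetCard_univ_mul_choose (A := {v}) (k := k)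
    (by simpa using hk)
  simp only [singleton_subset_iff, card_singleton, Nat.choose_one_right] at h
  have hV : (0 : ℝ) < Fintype.card V := by exact_mod_cast Fintype.card_pos_iff.mpr ⟨v⟩
  rw [div_mul_eq_mul_div, eq_div_iff hV.ne', mul_comm (k : ℝ)]
  exact_mod_cast h

theorem card_filter_pair_mem_powersetCard_univ_le {u v : V} (huv : u ≠ v) {k : ℕ} (hk : 2 ≤ k)
    (hkV : k ≤ Fintype.card V) :
    (#{T ∈ powersetCard k univ | u ∈ T ∧ v ∈ T} : ℝ) ≤
      (k / Fintype.card V) ^ 2 * (Fintype.card V).choose k := by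
  have h := card_filter_subset_powersetCard_univ_mul_choose (A := {u, v}) (k := k)
    (by rw [card_pair huv]; exact hk)
  simp only [insert_subset_iff, singleton_subset_iff, card_pair huv] at h
  set X := #{T ∈ powersetCard k univ | u ∈ T ∧ v ∈ T}
  set n := Fintype.card V
  set C := n.choose k
  have hX : (X : ℝ) * (n * (n - 1)) = C * (k * (k - 1)) := by
    have h' := congrArg (fun x : ℕ => (x : ℝ)) h
    simp only [Nat.cast_mul, Nat.cast_choose_two] at h'
    linarith
  have hn : (2 : ℝ) ≤ n := by exact_mod_cast hk.trans hkV
  have hkn : (k : ℝ) ≤ n := by exact_mod_cast hkV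
  have hC : (0 : ℝ) ≤ C := Nat.cast_nonneg _
  rw [div_pow, div_mul_eq_mul_div, le_div_iff₀ (by positivity)]
  refine le_of_mul_le_mul_right ?_ (by linarith : (0 : ℝ) < n - 1)
  calc (X : ℝ) * n ^ 2 * (n - 1) = C * (k * (k - 1)) * n := by rw [← hX]; ring
    _ ≤ C * (k * (k - 1)) * n + C * k * (n - k) := by
      have : (0 : ℝ) ≤ C * k * (n - k) := mul_nonneg (by positivity) (by linarith)
      linarith
    _ = k ^ 2 * C * (n - 1) := by ring

end KSubsets

section MeetingEdges

variable {V : Type*} [Fintype V] {k : ℕ}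

theorem card_filter_meets_edge_le (e : Sym2 V) (hk : 1 ≤ k) :
    (#{T ∈ powersetCard k (univ : Finset V) | ∃ v ∈ e, v ∈ T} : ℝ) ≤
      2 * (k / Fintype.card V) * (Fintype.card V).choose k := by
  induction e using Sym2.ind with
  | _ a b =>
  set P := powersetCard k (univ : Finset V)
  have hsplit : {T ∈ P | ∃ v ∈ s(a, b), v ∈ T} = {T ∈ P | a ∈ T} ∪ {T ∈ P | b ∈ T} := by
    rw [← filter_or]; simp only [Sym2.mem_iff, exists_eq_or_imp, exists_eq_left]
  calc (#{T ∈ P | ∃ v ∈ s(a, b), v ∈ T} : ℝ) ≤ #{T ∈ P | a ∈ T} + #{T ∈ P | b ∈ T} := by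
        rw [hsplit]; exact_mod_cast card_union_le _ _
    _ = _ := by
        rw [card_filter_mem_powersetCard_univ a hk, card_filter_mem_powersetCard_univ b hk]; ring

theorem card_filter_meets_disjoint_edges_le {e f : Sym2 V} (hef : ∀ v ∈ e, v ∉ f) (hk : 2 ≤ k)
    (hkV : k ≤ Fintype.card V) :
    (#{T ∈ powersetCard k (univ : Finset V) | (∃ v ∈ e, v ∈ T) ∧ ∃ v ∈ f, v ∈ T} : ℝ) ≤
      4 * (k / Fintype.card V) ^ 2 * (Fintype.card V).choose k := by
  induction e using Sym2.ind with
  | _ a b =>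
  induction f using Sym2.ind with
  | _ c d =>
  simp only [Sym2.mem_iff, forall_eq_or_imp, forall_eq, not_or] at hef
  obtain ⟨⟨hac, had⟩, hbc, hbd⟩ := hef
  set P := powersetCard k (univ : Finset V)
  have hsplit : {T ∈ P | (∃ v ∈ s(a, b), v ∈ T) ∧ ∃ v ∈ s(c, d), v ∈ T} =
      ({T ∈ P | a ∈ T ∧ c ∈ T} ∪ {T ∈ P | a ∈ T ∧ d ∈ T}) ∪
        ({T ∈ P | b ∈ T ∧ c ∈ T} ∪ {T ∈ P | b ∈ T ∧ d ∈ T}) := by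
    simp only [← filter_or, Sym2.mem_iff, exists_eq_or_imp, exists_eq_left]
    exact filter_congr fun T _ => by tauto
  have hpair := fun {u v : V} (huv : u ≠ v) =>
    card_filter_pair_mem_powersetCard_univ_le huv hk hkV
  calc (#{T ∈ P | (∃ v ∈ s(a, b), v ∈ T) ∧ ∃ v ∈ s(c, d), v ∈ T} : ℝ)
      ≤ (#{T ∈ P | a ∈ T ∧ c ∈ T} + #{T ∈ P | a ∈ T ∧ d ∈ T} : ℝ) +
          (#{T ∈ P | b ∈ T ∧ c ∈ T} + #{T ∈ P | b ∈ T ∧ d ∈ T}) := by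
        rw [hsplit]
        exact_mod_cast (card_union_le _ _).trans
          (add_le_add (card_union_le _ _) (card_union_le _ _))
    _ ≤ _ := by linarith [hpair hac, hpair had, hpair hbc, hpair hbd]

end MeetingEdges

theorem exists_card_le_sum_of_card_filter_mem_le {α ι : Type*} [Fintype ι] [DecidableEq ι]
    {P : Finset α} (hP : P.Nonempty) (D : α → Finset ι) (p : ι → ℝ)
    (hp : ∀ i, (#{T ∈ P | i ∈ D T} : ℝ) ≤ p i * #P) :
    ∃ T ∈ P, (#(D T) : ℝ) ≤ ∑ i, p i := by
  have hcount : ∑ T ∈ P, (#(D T) : ℝ) = ∑ i, (#{T ∈ P | i ∈ D T} : ℝ) := by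
    have hD : ∀ T, (#(D T) : ℝ) = ∑ i, if i ∈ D T then 1 else 0 := fun T => by
      rw [sum_boole, filter_mem_eq_inter, univ_inter]
    simp only [hD, ← sum_boole]
    exact sum_comm
  refine exists_le_of_sum_le hP ?_
  calc ∑ T ∈ P, (#(D T) : ℝ) ≤ ∑ i, p i * #P := hcount ▸ sum_le_sum fun i _ => hp i
    _ = ∑ _T ∈ P, ∑ i, p i := by rw [← sum_mul, sum_const, nsmul_eq_mul, mul_comm]

theorem exists_rainbow_of_pairwise_disjoint {ι β : Type*} [Fintype ι] [DecidableEq β]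
    (F : ι → Finset β) (hF : Pairwise (Disjoint on F)) (p : β → Prop) :
    ∃ R : Finset β, (∀ e ∈ R, p e ∧ ∃ i, e ∈ F i) ∧ (∀ i, #(R ∩ F i) ≤ 1) ∧
      #R = #{i | ∃ e ∈ F i, p e} := by
  set A := ({i | ∃ e ∈ F i, p e} : Finset ι)
  have hA : ∀ i ∈ A, ∃ e ∈ F i, p e := fun i hi => (mem_filter.mp hi).2
  choose g hgF hgp using hA
  have hclass : ∀ (a : A) (j : ι), g a a.2 ∈ F j → (a : ι) = j := fun a j haj =>
    by_contra fun hij => disjoint_left.mp (hF hij) (hgF a a.2) haj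
  have hinj : Injective fun a : A => g a a.2 := fun a b hab =>
    Subtype.ext <| hclass a b (by simpa only [hab] using hgF b b.2)
  refine ⟨A.attach.image fun a : A => g a a.2, ?_, fun i => ?_, ?_⟩
  · simp only [mem_image]
    rintro _ ⟨a, -, rfl⟩
    exact ⟨hgp a a.2, a, hgF a a.2⟩
  · simp only [card_le_one, mem_inter, mem_image]
    rintro _ ⟨⟨a, -, rfl⟩, ha⟩ _ ⟨⟨b, -, rfl⟩, hb⟩
    obtain rfl : a = b := Subtype.ext ((hclass a i ha).trans (hclass b i hb).symm)
    rfl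
  · rw [card_image_of_injective _ hinj, card_attach]

theorem exists_powersetCard_card_lost_classes_le {V ι : Type*} [Fintype V] [DecidableEq V]
    [Fintype ι] [DecidableEq ι] (F : ι → Finset (Sym2 V)) (IM : Finset ι)
    (hM : ∀ i ∈ IM, IsMatching2 (F i)) (hE : ∀ i ∉ IM, #(F i) = 1) {k : ℕ} (hk : 2 ≤ k)
    (hkV : k ≤ Fintype.card V) :
    ∃ T ∈ powersetCard k (univ : Finset V),
      (#{i | ¬∃ e ∈ F i, ∀ v ∈ e, v ∉ T} : ℝ) ≤
        2 * (k / Fintype.card V) * #IMᶜ + 4 * (k / Fintype.card V) ^ 2 * #IM := by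
  set q : ℝ := k / Fintype.card V
  set P := powersetCard k (univ : Finset V)
  have hP : (#P : ℝ) = (Fintype.card V).choose k := by rw [card_powersetCard, card_univ]
  have hPne : P.Nonempty := powersetCard_nonempty.mpr (by rwa [card_univ])
  have hlost : ∀ i, (#{T ∈ P | i ∈ ({i | ¬∃ e ∈ F i, ∀ v ∈ e, v ∉ T} : Finset ι)} : ℝ) ≤
      (if i ∈ IM then 4 * q ^ 2 else 2 * q) * #P := by
    intro i
    simp only [mem_filter, mem_univ, true_and, hP]
    push Not
    split_ifs with hi
    · obtain ⟨hcard, hdisj⟩ := hM i hi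
      obtain ⟨e, f, hef, hFi⟩ := card_eq_two.mp hcard
      have he : e ∈ F i := by simp [hFi]
      have hf : f ∈ F i := by simp [hFi]
      refine le_trans (Nat.cast_le.mpr (card_le_card fun T => ?_))
        (card_filter_meets_disjoint_edges_le (hdisj e he f hf hef) hk hkV)
      simp only [mem_filter]
      exact fun ⟨hTP, hT⟩ => ⟨hTP, hT e he, hT f hf⟩
    · obtain ⟨e, hFi⟩ := card_eq_one.mp (hE i hi)
      refine le_trans (Nat.cast_le.mpr (card_le_card fun T => ?_))
        (card_filter_meets_edge_le e (by omega))
      simp only [mem_filter]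
      exact fun ⟨hTP, hT⟩ => ⟨hTP, hT e (by simp [hFi])⟩
  obtain ⟨T, hT, hle⟩ := exists_card_le_sum_of_card_filter_mem_le hPne _ _ hlost
  refine ⟨T, hT, hle.trans_eq ?_⟩
  rw [sum_ite, sum_const, sum_const, filter_mem_eq_inter, univ_inter, filter_notMem_eq_sdiff,
    ← compl_eq_univ_sdiff, nsmul_eq_mul, nsmul_eq_mul]
  ring

theorem exists_powersetCard_rainbow_avoiding {V ι : Type*} [Fintype V] [DecidableEq V]
    [Fintype ι] [DecidableEq ι] (F : ι → Finset (Sym2 V)) (hF : Pairwise (Disjoint on F))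
    (IM : Finset ι) (hM : ∀ i ∈ IM, IsMatching2 (F i)) (hE : ∀ i ∉ IM, #(F i) = 1) {k : ℕ}
    (hk : 2 ≤ k) (hkV : k ≤ Fintype.card V) :
    ∃ T ∈ powersetCard k (univ : Finset V), ∃ R : Finset (Sym2 V),
      (∀ e ∈ R, (∀ v ∈ e, v ∉ T) ∧ ∃ i, e ∈ F i) ∧ (∀ i, #(R ∩ F i) ≤ 1) ∧
      (#IM + #IMᶜ : ℝ) - (2 * (k / Fintype.card V) * #IMᶜ + 4 * (k / Fintype.card V) ^ 2 * #IM)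
        ≤ #R := by
  obtain ⟨T, hT, hlost⟩ := exists_powersetCard_card_lost_classes_le F IM hM hE hk hkV
  obtain ⟨R, hRT, hRF, hRcard⟩ := exists_rainbow_of_pairwise_disjoint F hF
    (fun e => ∀ v ∈ e, v ∉ T)
  refine ⟨T, hT, R, hRT, hRF, ?_⟩
  have hcount : (#R : ℝ) + #{i | ¬∃ e ∈ F i, ∀ v ∈ e, v ∉ T} = #IM + #IMᶜ := by
    rw [hRcard]
    exact_mod_cast by rw [card_filter_add_card_filter_not, card_add_card_compl, card_univ]
  linarith

theorem one_sub_add_sq_mul_le_of_le {α γ q n t s : ℝ} (hγ : 0 < γ) (hγ16 : γ ≤ 1 / 16)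
    (hα : 1 / 2 + 8 * γ ≤ α) (hq : γ ≤ q) (hq' : q ≤ γ + γ ^ 2) (hn : 0 ≤ n)
    (ht : (α - γ ^ 2) * n ≤ t) (hs : (1 - α - γ ^ 2) * n ≤ s) :
    (1 - γ + γ ^ 2) * n ≤ t + s - (2 * q * s + 4 * q ^ 2 * t) := by
  have hq2 : q ≤ 1 / 8 := by nlinarith
  have hscalar :
      1 - γ + γ ^ 2 ≤ (α - γ ^ 2) * (1 - 4 * q ^ 2) + (1 - α - γ ^ 2) * (1 - 2 * q) := by
    nlinarith [mul_nonneg (sub_nonneg.mpr hα)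
        (mul_nonneg (hγ.le.trans hq) (by linarith : (0 : ℝ) ≤ 1 - 2 * q)),
      mul_nonneg hγ.le (sub_nonneg.mpr hq), mul_nonneg hγ.le (sub_nonneg.mpr hq')]
  have ht' := mul_le_mul_of_nonneg_right ht (by nlinarith : (0 : ℝ) ≤ 1 - 4 * q ^ 2)
  have hs' := mul_le_mul_of_nonneg_right hs (by linarith : (0 : ℝ) ≤ 1 - 2 * q)
  nlinarith [mul_le_mul_of_nonneg_right hscalar hn]

theorem ceil_mul_bounds {γ : ℝ} (hγ : 0 < γ) (hγ16 : γ ≤ 1 / 16) {n : ℕ} (hn : 1 / γ ^ 2 ≤ n) :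
    2 ≤ ⌈γ * n⌉₊ ∧ ⌈γ * n⌉₊ ≤ n ∧ γ ≤ ⌈γ * n⌉₊ / n ∧ (⌈γ * n⌉₊ : ℝ) / n ≤ γ + γ ^ 2 := by
  have hγn : 1 / γ ≤ γ * n := by
    rw [div_le_iff₀ (by positivity)] at hn ⊢; nlinarith
  have h16 : 16 ≤ 1 / γ := by rw [le_div_iff₀ hγ]; linarith
  have hn0 : (0 : ℝ) < n := lt_of_lt_of_le (by positivity) hn
  have hlo : γ * n ≤ ⌈γ * n⌉₊ := Nat.le_ceil _
  have hhi : (⌈γ * n⌉₊ : ℝ) < γ * n + 1 := Nat.ceil_lt_add_one (by positivity)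
  have hinv : 1 / n ≤ γ ^ 2 := by rwa [div_le_iff₀ hn0, ← div_le_iff₀' (by positivity)]
  refine ⟨by exact_mod_cast (by linarith : (2 : ℝ) ≤ ⌈γ * n⌉₊), ?_, ?_, ?_⟩
  · exact_mod_cast (by nlinarith : (⌈γ * n⌉₊ : ℝ) ≤ n)
  · rwa [le_div_iff₀ hn0]
  · calc (⌈γ * n⌉₊ : ℝ) / n ≤ (γ * n + 1) / n := by gcongr
      _ = γ + 1 / n := by field_simp
      _ ≤ γ + γ ^ 2 := by linarith

/-- For every `α > 1/2` there exist `ξ, β, c > 0` such that for every sufficiently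
large `n`: if a graph `G` on `n` vertices has an edge coloring `F = F_M ⊔ F_E`
(size-2 matchings and single edges, with `|F_M| ≥ (α − ξ)·n` and
`|F_E| ≥ (1 − α − ξ)·n`), then there is a vertex subset `S` with `|S| ≤ β·n`
such that the induced subgraph `G[S]` contains a rainbow edge set of size at
least `(β + c)·n`. -/
theorem statement_2 (α : ℝ) (hα : 1 / 2 < α) :
    ∃ ξ β c : ℝ, 0 < ξ ∧ 0 < β ∧ 0 < c ∧ ∃ n₀ : ℕ, ∀ n : ℕ, n₀ ≤ n →
      ∀ (m : ℕ) (G : SimpleGraph (Fin n)) (F : Fin m → Finset (Sym2 (Fin n)))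
        (IM : Finset (Fin m)),
        IsEdgeColoring G F →
        (∀ i ∈ IM, IsMatching2 (F i)) →
        (∀ i ∉ IM, (F i).card = 1) →
        (α - ξ) * n ≤ (IM.card : ℝ) →
        (1 - α - ξ) * n ≤ ((IMᶜ).card : ℝ) →
        ∃ S : Finset (Fin n), (S.card : ℝ) ≤ β * n ∧
          ∃ R : Finset (Sym2 (Fin n)),
            (R : Set (Sym2 (Fin n))) ⊆ G.edgeSet ∧
            (∀ e ∈ R, ∀ v : Fin n, v ∈ e → v ∈ S) ∧
            (∀ i, (R ∩ F i).card ≤ 1) ∧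
            (β + c) * n ≤ (R.card : ℝ) := by
  obtain ⟨γ, hγ, hγ16, hαγ⟩ : ∃ γ : ℝ, 0 < γ ∧ γ ≤ 1 / 16 ∧ 1 / 2 + 8 * γ ≤ α :=
    ⟨min (α - 1 / 2) (1 / 2) / 8, div_pos (lt_min (by linarith) one_half_pos) (by norm_num),
      by linarith [min_le_right (α - 1 / 2) (1 / 2)], by linarith [min_le_left (α - 1 / 2) (1 / 2)]⟩
  refine ⟨γ ^ 2, 1 - γ, γ ^ 2, by positivity, by linarith, by positivity, ⌈1 / γ ^ 2⌉₊, ?_⟩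
  intro n hn m G F IM hF hM hE ht hs
  obtain ⟨-, hdisj, hFG, -⟩ := hF
  obtain ⟨hk2, hkn, hq, hq'⟩ := ceil_mul_bounds hγ hγ16 (Nat.ceil_le.mp hn)
  set k := ⌈γ * n⌉₊
  obtain ⟨T, hT, R, hRT, hRF, hRcard⟩ :=
    exists_powersetCard_rainbow_avoiding F hdisj IM hM hE hk2 (by simpa using hkn)
  refine ⟨Tᶜ, ?_, R, fun e he => ?_, fun e he v hv => mem_compl.mpr ((hRT e he).1 v hv), hRF, ?_⟩
  · rw [card_compl, Fintype.card_fin, (mem_powersetCard.mp hT).2, Nat.cast_sub hkn]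
    linarith [Nat.le_ceil (γ * n)]
  · obtain ⟨-, i, hi⟩ := hRT e he
    exact hFG i hi
  · rw [Fintype.card_fin] at hRcard
    linarith [one_sub_add_sq_mul_le_of_le hγ hγ16 hαγ hq hq' (Nat.cast_nonneg n) ht hs]
end

section
/- For every real α > 1/2 there exist constants ξ > 0 and c > 0 such that for every sufficiently large integer n the following holds: let G be a graph on n vertices with an edge coloring F = F_M ⊔ F_E, where every color class in F_M is a matching of size 2, every color class in F_E is a single edge, |F_M| ≥ (α − ξ)·n, and |F_E| ≥ (1 − α − ξ)·n. Then there exists a subset S of V(G) such that the maximum size of a rainbow edge set contained in the induced subgraph G[S] is at least |S| + c·n. -/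
open Finset SimpleGraph
open scoped Classical

/-! Choose `S` at random, keeping each vertex independently with probability `q < 1`; here this
is `S = σ⁻¹(A)` for a uniformly random `σ : V → β`, with `q = A.dens`. A single-edge class keeps an
edge inside `S` with probability `q²`, a matching of size 2 with probability `2q² - q⁴`. Hence the
expected number of classes with an edge inside `G[S]`, minus the expected size of `S`, is at least
`n (α (2q² - q⁴) + (1 - α) q² - q) - 3ξn = n (q (1 - q) (α q² + α q - 1) - 3ξ)`, and since
`2α - 1 > 0` the last factor is positive for `q` close to `1`. Some `σ` beats the average, and one
edge from each class that meets `G[S]` is a rainbow edge set. -/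

section RandomSubset

variable {V β : Type*} [Fintype V] [DecidableEq β]

def selected (A : Finset β) (σ : V → β) : Finset V := {v | σ v ∈ A}

@[simp] lemma mem_selected {A : Finset β} {σ : V → β} {v : V} :
    v ∈ selected A σ ↔ σ v ∈ A := by
  simp [selected]

variable [DecidableEq V] [Fintype β]

lemma card_filter_subset_selected (A : Finset β) (K : Finset V) :
    (#{σ : V → β | K ⊆ selected A σ} : ℝ)
      = (A.dens : ℝ) ^ #K * Fintype.card β ^ Fintype.card V := by
  have hpi : ({σ : V → β | K ⊆ selected A σ} : Finset (V → β))
      = Fintype.piFinset fun v => if v ∈ K then A else univ := by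
    ext σ
    simp only [mem_filter, mem_univ, true_and, Fintype.mem_piFinset, subset_iff, mem_selected]
    refine ⟨fun h v => ?_, fun h v hv => by simpa [hv] using h v⟩
    split_ifs with hv
    exacts [h hv, mem_univ _]
  rw [hpi, Fintype.card_piFinset, Nat.cast_prod]
  calc ∏ v, (#(if v ∈ K then A else univ) : ℝ)
      = ∏ v, (if v ∈ K then (A.dens : ℝ) else 1) * Fintype.card β := by
        refine prod_congr rfl fun v _ => ?_
        split_ifs <;> simp
    _ = _ := by
        rw [prod_mul_distrib, prod_ite_mem, univ_inter, prod_const, prod_const, card_univ]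

lemma card_filter_subset_selected_or (A : Finset β) {K₁ K₂ : Finset V} (h : Disjoint K₁ K₂) :
    (#{σ : V → β | K₁ ⊆ selected A σ ∨ K₂ ⊆ selected A σ} : ℝ)
      = ((A.dens : ℝ) ^ #K₁ + (A.dens : ℝ) ^ #K₂
          - (A.dens : ℝ) ^ (#K₁ + #K₂)) * Fintype.card β ^ Fintype.card V := by
  have hunion := card_union_add_card_inter
    {σ : V → β | K₁ ⊆ selected A σ} {σ : V → β | K₂ ⊆ selected A σ}
  rw [← filter_or, ← filter_and] at hunion
  simp only [← union_subset_iff] at hunion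
  have h₁ := card_filter_subset_selected A K₁
  have h₂ := card_filter_subset_selected A K₂
  have h₁₂ := card_filter_subset_selected A (K₁ ∪ K₂)
  rw [card_union_of_disjoint h] at h₁₂
  have hcast := congrArg (Nat.cast : ℕ → ℝ) hunion
  push_cast at hcast
  linarith

lemma sum_card_selected (A : Finset β) :
    ∑ σ : V → β, (#(selected A σ) : ℝ)
      = Fintype.card V * ((A.dens : ℝ) * Fintype.card β ^ Fintype.card V) := by
  have hv (v : V) : (#{σ : V → β | σ v ∈ A} : ℝ)
      = (A.dens : ℝ) * Fintype.card β ^ Fintype.card V := by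
    simpa using card_filter_subset_selected A {v}
  simp_rw [selected, card_filter, Nat.cast_sum]
  rw [sum_comm]
  simp only [Nat.cast_ite, Nat.cast_one, Nat.cast_zero, sum_boole, hv, sum_const, card_univ,
    nsmul_eq_mul]

end RandomSubset

section Coloring

variable {V β ι : Type*} [DecidableEq V] [Fintype ι]

def coveredClasses (F : ι → Finset (Sym2 V)) (S : Finset V) : Finset ι :=
  {i | ∃ e ∈ F i, e ∈ S.sym2}

lemma exists_rainbow_card_eq_card_coveredClasses {G : SimpleGraph V} {F : ι → Finset (Sym2 V)}
    (hdisj : ∀ i j, i ≠ j → Disjoint (F i) (F j)) (hG : ∀ i, (F i : Set (Sym2 V)) ⊆ G.edgeSet)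
    (S : Finset V) :
    ∃ R : Finset (Sym2 V), (R : Set (Sym2 V)) ⊆ G.edgeSet ∧ (∀ e ∈ R, ∀ v ∈ e, v ∈ S) ∧
      (∀ i, #(R ∩ F i) ≤ 1) ∧ #R = #(coveredClasses F S) := by
  choose f hfF hfS using fun i : coveredClasses F S => (mem_filter.1 i.2).2
  have hclass {i j} (he : f i ∈ F j) : (i : ι) = j := by
    by_contra hij
    exact Finset.disjoint_left.1 (hdisj _ _ hij) (hfF i) he
  have hf : Function.Injective f := fun i j h => Subtype.ext (hclass (h ▸ hfF j))
  refine ⟨univ.image f, ?_, ?_, fun j => card_le_one.2 ?_, ?_⟩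
  · simp only [coe_image, coe_univ, Set.image_univ, Set.range_subset_iff]
    exact fun i => hG _ (hfF i)
  · simp only [mem_image, mem_univ, true_and, forall_exists_index, forall_apply_eq_imp_iff]
    exact fun i => mem_sym2_iff.1 (hfS i)
  · simp only [mem_inter, mem_image, mem_univ, true_and, and_imp, forall_exists_index]
    rintro _ i rfl hi _ i' rfl hi'
    exact congrArg f (Subtype.ext ((hclass hi).trans (hclass hi').symm))
  · rw [card_image_of_injective _ hf, card_univ, Fintype.card_coe]

variable [Fintype V] [Fintype β] [DecidableEq β]

lemma card_filter_mem_sym2_selected_of_card_eq_one (A : Finset β) {M : Finset (Sym2 V)}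
    (hM : #M = 1) (hdiag : ∀ e ∈ M, ¬ e.IsDiag) :
    (#{σ : V → β | ∃ e ∈ M, e ∈ (selected A σ).sym2} : ℝ)
      = (A.dens : ℝ) ^ 2 * Fintype.card β ^ Fintype.card V := by
  obtain ⟨e, rfl⟩ := card_eq_one.1 hM
  induction e using Sym2.ind with | _ a b => ?_
  have hab : a ≠ b := by simpa using hdiag s(a, b) (mem_singleton_self _)
  have hpair (σ : V → β) :
      (∃ e ∈ ({s(a, b)} : Finset _), e ∈ (selected A σ).sym2) ↔ {a, b} ⊆ selected A σ := by
    simp [insert_subset_iff]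
  rw [filter_congr fun σ _ => hpair σ, card_filter_subset_selected, card_pair hab]

lemma card_filter_mem_sym2_selected_of_isMatching2 (A : Finset β) {M : Finset (Sym2 V)}
    (hM : IsMatching2 M) (hdiag : ∀ e ∈ M, ¬ e.IsDiag) :
    (#{σ : V → β | ∃ e ∈ M, e ∈ (selected A σ).sym2} : ℝ)
      = (2 * (A.dens : ℝ) ^ 2 - (A.dens : ℝ) ^ 4)
          * Fintype.card β ^ Fintype.card V := by
  obtain ⟨hcard, hvert⟩ := hM
  obtain ⟨e₁, e₂, hne, rfl⟩ := card_eq_two.1 hcard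
  induction e₁ using Sym2.ind with | _ a b => ?_
  induction e₂ using Sym2.ind with | _ c d => ?_
  have hab : a ≠ b := by simpa using hdiag s(a, b) (by simp)
  have hcd : c ≠ d := by simpa using hdiag s(c, d) (by simp)
  have hK : Disjoint ({a, b} : Finset V) {c, d} := by
    rw [Finset.disjoint_left]
    intro v hv
    simpa using hvert s(a, b) (by simp) s(c, d) (by simp) hne v (by simpa using hv)
  have hpairs (σ : V → β) : (∃ e ∈ ({s(a, b), s(c, d)} : Finset _), e ∈ (selected A σ).sym2)
      ↔ {a, b} ⊆ selected A σ ∨ {c, d} ⊆ selected A σ := by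
    simp [insert_subset_iff]
  rw [filter_congr fun σ _ => hpairs σ, card_filter_subset_selected_or A hK, card_pair hab, card_pair hcd]
  ring

variable [DecidableEq ι]

lemma sum_card_coveredClasses (A : Finset β) {F : ι → Finset (Sym2 V)}
    {IM : Finset ι} (hdiag : ∀ i, ∀ e ∈ F i, ¬ e.IsDiag) (hM : ∀ i ∈ IM, IsMatching2 (F i))
    (hE : ∀ i ∉ IM, #(F i) = 1) :
    ∑ σ : V → β, (#(coveredClasses F (selected A σ)) : ℝ)
      = (#IM * (2 * (A.dens : ℝ) ^ 2 - (A.dens : ℝ) ^ 4)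
          + #IMᶜ * (A.dens : ℝ) ^ 2) * Fintype.card β ^ Fintype.card V := by
  simp_rw [coveredClasses, card_filter, Nat.cast_sum]
  rw [sum_comm]
  simp only [Nat.cast_ite, Nat.cast_one, Nat.cast_zero, sum_boole]
  rw [← sum_add_sum_compl IM,
    sum_congr rfl fun i hi => card_filter_mem_sym2_selected_of_isMatching2 A (hM i hi) (hdiag i),
    sum_congr rfl fun i hi =>
      card_filter_mem_sym2_selected_of_card_eq_one A (hE i (by simpa using hi)) (hdiag i)]
  simp only [sum_const, nsmul_eq_mul]
  ring

lemma exists_card_selected_add_le_card_coveredClasses [Nonempty β]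
    (A : Finset β) {F : ι → Finset (Sym2 V)} {IM : Finset ι}
    (hdiag : ∀ i, ∀ e ∈ F i, ¬ e.IsDiag) (hM : ∀ i ∈ IM, IsMatching2 (F i))
    (hE : ∀ i ∉ IM, #(F i) = 1) :
    ∃ σ : V → β, (#(selected A σ) : ℝ)
        + (#IM * (2 * (A.dens : ℝ) ^ 2 - (A.dens : ℝ) ^ 4)
          + #IMᶜ * (A.dens : ℝ) ^ 2 - Fintype.card V * (A.dens : ℝ))
      ≤ #(coveredClasses F (selected A σ)) := by
  have hsum : ∑ σ : V → β, ((#(selected A σ) : ℝ)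
        + (#IM * (2 * (A.dens : ℝ) ^ 2 - (A.dens : ℝ) ^ 4) + #IMᶜ * (A.dens : ℝ) ^ 2
          - Fintype.card V * (A.dens : ℝ)))
      ≤ ∑ σ : V → β, (#(coveredClasses F (selected A σ)) : ℝ) := by
    rw [sum_add_distrib, sum_card_selected, sum_const, card_univ, Fintype.card_fun, nsmul_eq_mul,
      sum_card_coveredClasses A hdiag hM hE]
    push_cast
    linarith
  obtain ⟨σ, -, hσ⟩ := exists_le_of_sum_le univ_nonempty hsum
  exact ⟨σ, hσ⟩

end Coloring

def gain (α q : ℝ) : ℝ := q * (1 - q) * (α * q ^ 2 + α * q - 1)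

lemma exists_nat_gain_pos {α : ℝ} (hα : 1 / 2 < α) : ∃ N : ℕ, 0 < gain α (N / (N + 1)) := by
  have hlim : Filter.Tendsto (fun N : ℕ => α * ((N : ℝ) / (N + 1)) ^ 2 + α * (N / (N + 1)) - 1)
      Filter.atTop (nhds (α * 1 ^ 2 + α * 1 - 1)) :=
    ((tendsto_natCast_div_add_atTop (1 : ℝ)).pow 2 |>.const_mul α).add
      ((tendsto_natCast_div_add_atTop (1 : ℝ)).const_mul α) |>.sub_const 1
  obtain ⟨N, hpos, hN⟩ := ((hlim.eventually (lt_mem_nhds (by linarith : (0 : ℝ) < _))).and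
    (Filter.eventually_ge_atTop 1)).exists
  refine ⟨N, mul_pos (mul_pos ?_ ?_) hpos⟩
  · have : (0 : ℝ) < N := by exact_mod_cast hN
    positivity
  · rw [sub_pos, div_lt_one (by positivity)]
    linarith

lemma mul_gain_sub_le {α ξ q n K L : ℝ} (hq₀ : 0 ≤ q) (hq₁ : q ≤ 1) (hξ : 0 ≤ ξ) (hn : 0 ≤ n)
    (hK : (α - ξ) * n ≤ K) (hL : (1 - α - ξ) * n ≤ L) :
    n * (gain α q - 3 * ξ) ≤ K * (2 * q ^ 2 - q ^ 4) + L * q ^ 2 - n * q := by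
  have hq2 : q ^ 2 ≤ 1 := pow_le_one₀ hq₀ hq₁
  have hM := mul_le_mul_of_nonneg_right hK (by nlinarith : 0 ≤ 2 * q ^ 2 - q ^ 4)
  have hE := mul_le_mul_of_nonneg_right hL (sq_nonneg q)
  have hslack : 0 ≤ n * ξ * (3 - 3 * q ^ 2 + q ^ 4) := by
    have : 0 ≤ 3 - 3 * q ^ 2 + q ^ 4 := by nlinarith
    positivity
  unfold gain
  linarith

/-- For every `α > 1/2` there exist `ξ, c > 0` such that for every sufficiently
large `n`: if a graph `G` on `n` vertices has an edge coloring `F = F_M ⊔ F_E`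
(size-2 matchings and single edges, with `|F_M| ≥ (α − ξ)·n` and
`|F_E| ≥ (1 − α − ξ)·n`), then there is a vertex subset `S` such that the
maximum size of a rainbow edge set contained in `G[S]` is at least `|S| + c·n`. -/
theorem statement_3 (α : ℝ) (hα : 1 / 2 < α) :
    ∃ ξ c : ℝ, 0 < ξ ∧ 0 < c ∧ ∃ n₀ : ℕ, ∀ n : ℕ, n₀ ≤ n →
      ∀ (m : ℕ) (G : SimpleGraph (Fin n)) (F : Fin m → Finset (Sym2 (Fin n)))
        (IM : Finset (Fin m)),
        IsEdgeColoring G F →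
        (∀ i ∈ IM, IsMatching2 (F i)) →
        (∀ i ∉ IM, (F i).card = 1) →
        (α - ξ) * n ≤ (IM.card : ℝ) →
        (1 - α - ξ) * n ≤ ((IMᶜ).card : ℝ) →
        ∃ S : Finset (Fin n), ∃ R : Finset (Sym2 (Fin n)),
          (R : Set (Sym2 (Fin n))) ⊆ G.edgeSet ∧
          (∀ e ∈ R, ∀ v : Fin n, v ∈ e → v ∈ S) ∧
          (∀ i, (R ∩ F i).card ≤ 1) ∧
          (S.card : ℝ) + c * n ≤ (R.card : ℝ) := by
  obtain ⟨N, hN⟩ := exists_nat_gain_pos hα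
  let A : Finset (Fin (N + 1)) := univ.erase 0
  have hA : (A.dens : ℝ) = N / (N + 1) := by simp [A, dens]
  rw [← hA] at hN
  refine ⟨gain α A.dens / 6, gain α A.dens / 2, by positivity, by positivity, 0,
    fun n _ m G F IM hcol hM hE hK hL => ?_⟩
  obtain ⟨-, hdisj, hG, -⟩ := hcol
  have hdiag : ∀ i, ∀ e ∈ F i, ¬ e.IsDiag := fun i e he => G.not_isDiag_of_mem_edgeSet (hG i he)
  obtain ⟨σ, hσ⟩ := exists_card_selected_add_le_card_coveredClasses A hdiag hM hE
  obtain ⟨R, hRG, hRS, hRF, hR⟩ :=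
    exists_rainbow_card_eq_card_coveredClasses hdisj hG (selected A σ)
  refine ⟨selected A σ, R, hRG, hRS, hRF, ?_⟩
  have hgain := mul_gain_sub_le (NNRat.cast_nonneg A.dens) (by exact_mod_cast dens_le_one)
    (by positivity) (Nat.cast_nonneg n) hK hL
  rw [Fintype.card_fin] at hσ
  rw [hR]
  linarith
end

section
/- For every integer n ≥ 8 divisible by 4 there exists a graph G on n vertices together with an edge coloring into n pairwise disjoint color classes, of which exactly n/2 are matchings of size 2 and exactly n/2 are single edges, such that the rainbow girth of G with respect to this coloring equals n/2. (Explicitly: the vertices are v_{i,j} for 1 ≤ i ≤ n/4 and 1 ≤ j ≤ 4; for each i the pair {v_{i,1}v_{i,2}, v_{i,3}v_{i,4}} is a size-2 matching class and v_{i,2}v_{i,3} and v_{i,4}v_{i,1} are two single-edge classes, and for each i the pair {v_{i,3}v_{i+1,2}, v_{i,4}v_{i+1,1}} (first index modulo n/4) is a size-2 matching class.) -/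
open Finset SimpleGraph
open scoped Classical

/-!
Write `v i r` for the paper's `v_{i+1,r+1}` (`vtx i r`, with `i : Fin (n/4)` and `r : Fin 4`);
colour classes are indexed the same way. The rainbow cycle runs along
`v 0 1, v 0 2, v 1 1, v 1 2, …`, using each single class `{v i 1 v i 2}` and one edge of each
link class `{v i 2 v (i+1) 1, v i 3 v (i+1) 0}`.

For the lower bound give `v i r` the height `2 i + ⌊r / 2⌋`. Every edge changes the height by at
most one, except the two edges of the wrap-around link class (from the last block to the first),
which change it by `n/2 - 1`. A rainbow cycle through a wrap-around edge uses exactly one of them,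
and the other edges must undo its height change, so the cycle has length at least `n/2`. A rainbow
cycle through an edge of any other link class `i` crosses the cut between the blocks `≤ i` and
`> i` once in that class, so it must cross it again, which only a wrap-around edge can do.
Finally, a cycle avoiding all link edges has degree two at each of its vertices, so it is a
whole 4-cycle `v i 0 v i 1 v i 2 v i 3`, whose edges `v i 0 v i 1` and `v i 2 v i 3` share a
colour.
-/

namespace SimpleGraph

variable {V : Type*} {G : SimpleGraph V}

namespace Walk

theorem sum_darts_sub {M : Type*} [AddCommGroup M] (f : V → M) {u v : V} (p : G.Walk u v) :
    (p.darts.map fun d => f d.snd - f d.fst).sum = f v - f u := by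
  induction p with
  | nil => simp
  | cons h p ih => simp [ih]

theorem sum_darts_erase_sub {M : Type*} [AddCommGroup M] (f : V → M) {u : V} (p : G.Walk u u)
    {d : G.Dart} (hd : d ∈ p.darts) :
    ((p.darts.erase d).map fun d' => f d'.snd - f d'.fst).sum = f d.fst - f d.snd := by
  have h := ((List.perm_cons_erase hd).map fun d' => f d'.snd - f d'.fst).sum_eq
  rw [sum_darts_sub, sub_self, List.map_cons, List.sum_cons] at h
  rw [← neg_sub]
  exact eq_neg_of_add_eq_zero_left (by rw [add_comm, h])

theorem IsTrail.edge_ne_of_mem_darts_erase {u v : V} {p : G.Walk u v} (hp : p.IsTrail)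
    {d d₀ : G.Dart} (hd₀ : d₀ ∈ p.darts) (hd : d ∈ p.darts.erase d₀) : d.edge ≠ d₀.edge := by
  obtain ⟨hne, hmem⟩ := (hp.edges_nodup.of_map _).mem_erase_iff.1 hd
  exact fun h => hne (List.inj_on_of_nodup_map hp.edges_nodup hmem hd₀ h)

theorem IsTrail.abs_sub_add_one_le_length {u : V} {p : G.Walk u u} (hp : p.IsTrail)
    (f : V → ℤ) {a b : V} (he : s(a, b) ∈ p.edges)
    (hf : ∀ x y, s(x, y) ∈ p.edges → s(x, y) ≠ s(a, b) → |f y - f x| ≤ 1) :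
    |f b - f a| + 1 ≤ p.length := by
  obtain ⟨d₀, hd₀, hd₀e⟩ := List.mem_map.1 he
  have hstep : ∀ d ∈ p.darts.erase d₀, |f d.snd - f d.fst| ≤ 1 := fun d hd =>
    hf _ _ (List.mem_map_of_mem (List.mem_of_mem_erase hd))
      (hd₀e ▸ hp.edge_ne_of_mem_darts_erase hd₀ hd)
  have hbound : |f d₀.fst - f d₀.snd| ≤ (p.darts.erase d₀).length := by
    rw [← sum_darts_erase_sub f p hd₀, ← Multiset.sum_coe]
    refine Multiset.abs_sum_le_sum_abs.trans ?_
    rw [Multiset.map_coe, Multiset.sum_coe, List.map_map]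
    have := List.sum_le_card_nsmul ((p.darts.erase d₀).map fun d => |f d.snd - f d.fst|) 1
      (by simpa using hstep)
    simpa [Function.comp_def] using this
  rw [List.length_erase_of_mem hd₀, length_darts] at hbound
  have hlen : 0 < p.length := by
    rw [← length_darts]
    exact List.length_pos_of_mem hd₀
  rcases Sym2.eq_iff.1 hd₀e with ⟨rfl, rfl⟩ | ⟨rfl, rfl⟩
  · rw [abs_sub_comm] at hbound
    omega
  · omega

theorem IsTrail.exists_mem_edges_crossing {u : V} {p : G.Walk u u} (hp : p.IsTrail) (S : Set V)
    {a b : V} (he : s(a, b) ∈ p.edges) (ha : a ∈ S) (hb : b ∉ S) :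
    ∃ x y, s(x, y) ∈ p.edges ∧ s(x, y) ≠ s(a, b) ∧ x ∈ S ∧ y ∉ S := by
  let f : V → ℤ := fun x => if x ∈ S then 1 else 0
  obtain ⟨d₀, hd₀, hd₀e⟩ := List.mem_map.1 he
  have hsum := sum_darts_erase_sub f p hd₀
  obtain ⟨d, hd, hcross⟩ : ∃ d ∈ p.darts.erase d₀, f d.snd - f d.fst ≠ 0 := by
    by_contra! h
    rw [List.sum_eq_zero (by simpa using h)] at hsum
    rcases Sym2.eq_iff.1 hd₀e with ⟨h₁, h₂⟩ | ⟨h₁, h₂⟩ <;> simp [f, h₁, h₂, ha, hb] at hsum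
  have hne := hd₀e ▸ hp.edge_ne_of_mem_darts_erase hd₀ hd
  have hedge : s(d.fst, d.snd) ∈ p.edges := List.mem_map_of_mem (List.mem_of_mem_erase hd)
  by_cases hfst : d.fst ∈ S
  · have hsnd : d.snd ∉ S := fun h => hcross (by simp [f, hfst, h])
    exact ⟨d.fst, d.snd, hedge, hne, hfst, hsnd⟩
  · have hsnd : d.snd ∈ S := by_contra fun h => hcross (by simp [f, hfst, h])
    exact ⟨d.snd, d.fst, Sym2.eq_swap ▸ hedge, Sym2.eq_swap ▸ hne, hsnd, hfst⟩

theorem IsTrail.exists_mem_edges_ne {u : V} {p : G.Walk u u} (hp : p.IsTrail) {a b : V}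
    (he : s(a, b) ∈ p.edges) : ∃ c, s(a, c) ∈ p.edges ∧ s(a, c) ≠ s(a, b) := by
  obtain ⟨x, y, hxy, hne, rfl, -⟩ := hp.exists_mem_edges_crossing {a} he rfl
    (p.adj_of_mem_edges he).ne.symm
  exact ⟨y, hxy, hne⟩

end Walk

theorem exists_isCycle_of_injective {n : ℕ} [NeZero n] (hn : 3 ≤ n) (f : Fin n → V)
    (hf : Function.Injective f) (hadj : ∀ j, G.Adj (f j) (f (j + 1))) :
    ∃ u, ∃ w : G.Walk u u, w.IsCycle ∧ w.length = n ∧ ∀ e ∈ w.edges, ∃ j, e = s(f j, f (j + 1)) := by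
  have hone : ((1 : Fin n) : ℕ) = 1 := by rw [Fin.val_one', Nat.mod_eq_of_lt (by omega)]
  have hcyc : ∀ {a b : Fin n}, (cycleGraph n).Adj a b → a = b + 1 ∨ b = a + 1 := by
    intro a b h
    rwa [cycleGraph_adj', ← hone, ← Fin.ext_iff, ← Fin.ext_iff, sub_eq_iff_eq_add,
      sub_eq_iff_eq_add, add_comm 1, add_comm 1] at h
  let φ : cycleGraph n →g G :=
    ⟨f, fun h => by rcases hcyc h with rfl | rfl; exacts [(hadj _).symm, hadj _]⟩
  obtain ⟨l, rfl⟩ : ∃ l, n = l + 3 := ⟨n - 3, by omega⟩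
  refine ⟨f 0, (cycleGraph.cycle l).map φ, (Walk.isCycle_map_iff_of_injective hf).2
    cycleGraph.isCycle_cycle, by simp, fun e he => ?_⟩
  obtain ⟨e', he', rfl⟩ := List.mem_map.1 ((Walk.edges_map _ _) ▸ he)
  induction e' using Sym2.ind with
  | h a b =>
    rcases hcyc ((cycleGraph.cycle l).adj_of_mem_edges he') with rfl | rfl
    · exact ⟨b, Sym2.eq_swap⟩
    · exact ⟨a, rfl⟩

end SimpleGraph

section Coloring

variable {V ι : Type*}

theorem isEdgeColoring_fromEdgeSet_iUnion {F : ι → Finset (Sym2 V)} (hne : ∀ i, (F i).Nonempty)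
    (hdisj : ∀ i j, i ≠ j → Disjoint (F i) (F j)) (hdiag : ∀ i, ∀ e ∈ F i, ¬e.IsDiag) :
    IsEdgeColoring (fromEdgeSet (⋃ i, (F i : Set (Sym2 V)))) F := by
  refine ⟨hne, hdisj, fun i e he => ?_, fun e he => ?_⟩
  · rw [edgeSet_fromEdgeSet]
    exact ⟨Set.mem_iUnion.2 ⟨i, he⟩, hdiag i e he⟩
  · rw [edgeSet_fromEdgeSet] at he
    simpa using he.1

theorem isMatching2_pair [DecidableEq V] {a b c d : V} (hac : a ≠ c) (had : a ≠ d) (hbc : b ≠ c)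
    (hbd : b ≠ d) : IsMatching2 ({s(a, b), s(c, d)} : Finset (Sym2 V)) := by
  refine ⟨Finset.card_pair (by simp [hac, had]), ?_⟩
  simp only [Finset.mem_insert, Finset.mem_singleton]
  rintro e₁ (rfl | rfl) e₂ (rfl | rfl) hne v hv₁ hv₂ <;> simp only [Sym2.mem_iff] at hv₁ hv₂ <;>
    grind

theorem isRainbow_of_injective {G : SimpleGraph V} {F : ι → Finset (Sym2 V)}
    (hdisj : ∀ i j, i ≠ j → Disjoint (F i) (F j)) {α : Type*} (γ : α → ι)
    (hγ : Function.Injective γ) (E : α → Sym2 V) (hE : ∀ a, E a ∈ F (γ a)) {u : V}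
    (w : G.Walk u u) (hw : ∀ e ∈ w.edges, ∃ a, e = E a) : IsRainbow F w := by
  have hcolor : ∀ a i, E a ∈ F i → γ a = i := fun a i h =>
    by_contra fun hne => Finset.disjoint_left.1 (hdisj _ _ hne) (hE a) h
  intro i e₁ he₁ e₂ he₂ h₁ h₂
  obtain ⟨a₁, rfl⟩ := hw e₁ he₁
  obtain ⟨a₂, rfl⟩ := hw e₂ he₂
  rw [hγ ((hcolor a₁ i h₁).trans (hcolor a₂ i h₂).symm)]

end Coloring

namespace Fin

variable {m : ℕ} [NeZero m]

theorem val_add_one_of_ne_neg_one {i : Fin m} (h : i ≠ -1) : ((i + 1 : Fin m) : ℕ) = i + 1 := by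
  refine val_add_one_of_lt' (lt_of_le_of_ne i.isLt fun him => h ?_)
  rw [← add_eq_zero_iff_eq_neg]
  ext
  rw [val_add, val_one', Nat.add_mod_mod, him, Nat.mod_self, val_zero]

theorem val_neg_one_add_one : ((-1 : Fin m) : ℕ) + 1 = m := by
  by_contra hne
  have h := val_add_one_of_lt' (lt_of_le_of_ne (-1 : Fin m).isLt hne)
  simp at h

end Fin

section

variable {m : ℕ} [NeZero m]

theorem finProdFinEquiv_zero_add_one (i : Fin m) :
    (finProdFinEquiv (i, 0) : Fin (m * 2)) + 1 = finProdFinEquiv (i, 1) := by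
  ext
  simp only [Fin.val_add, finProdFinEquiv_apply_val]
  have := i.isLt
  simp [add_comm, Nat.mod_eq_of_lt (show 1 + 2 * (i : ℕ) < m * 2 by omega)]

theorem finProdFinEquiv_one_add_one (i : Fin m) :
    (finProdFinEquiv (i, 1) : Fin (m * 2)) + 1 = finProdFinEquiv (i + 1, 0) := by
  ext
  simp only [Fin.val_add, finProdFinEquiv_apply_val]
  simp [show 1 + 2 * (i : ℕ) + 1 = 2 * (i + 1) by ring, mul_comm m 2, Nat.mul_mod_mul_left]

end

namespace RainbowBlocks

variable {k : ℕ}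

def vtx (i : Fin k) (r : Fin 4) : Fin (k * 4) := finProdFinEquiv (i, r)

theorem vtx_inj {i j : Fin k} {r s : Fin 4} : vtx i r = vtx j s ↔ i = j ∧ r = s := by
  simp [vtx, finProdFinEquiv.apply_eq_iff_eq]

theorem exists_eq_vtx (x : Fin (k * 4)) : ∃ i r, x = vtx i r :=
  ⟨_, _, (finProdFinEquiv.apply_symm_apply x).symm⟩

def block (x : Fin (k * 4)) : Fin k := (finProdFinEquiv.symm x).1

def slot (x : Fin (k * 4)) : Fin 4 := (finProdFinEquiv.symm x).2

@[simp] theorem block_vtx (i : Fin k) (r : Fin 4) : block (vtx i r) = i := by simp [block, vtx]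

@[simp] theorem slot_vtx (i : Fin k) (r : Fin 4) : slot (vtx i r) = r := by simp [slot, vtx]

def height (x : Fin (k * 4)) : ℤ := 2 * ((block x : ℕ) : ℤ) + ((slot x : ℕ) / 2 : ℕ)

@[simp] theorem height_vtx (i : Fin k) (r : Fin 4) :
    height (vtx i r) = 2 * ((i : ℕ) : ℤ) + ((r : ℕ) / 2 : ℕ) := by
  simp [height]

def matchingColors : Finset (Fin (k * 4)) :=
  ((Finset.univ : Finset (Fin k)) ×ˢ ({0, 2} : Finset (Fin 4))).map finProdFinEquiv.toEmbedding

theorem card_matchingColors : (matchingColors (k := k)).card = k * 2 := by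
  simp [matchingColors]

def spine (j : Fin (k * 2)) : Fin (k * 4) :=
  vtx (finProdFinEquiv.symm j).1 (![1, 2] (finProdFinEquiv.symm j).2)

theorem spine_injective : Function.Injective (spine (k := k)) := by
  intro j j' h
  rw [spine, spine, vtx_inj] at h
  refine finProdFinEquiv.symm.injective (Prod.ext h.1 ?_)
  have h2 := h.2
  generalize (finProdFinEquiv.symm j).2 = a at h2
  generalize (finProdFinEquiv.symm j').2 = b at h2
  fin_cases a <;> fin_cases b <;> simp_all

variable [NeZero k]

def innerEdge (i : Fin k) (r : Fin 4) : Sym2 (Fin (k * 4)) := s(vtx i r, vtx i (r + 1))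

def linkClass (i : Fin k) : Finset (Sym2 (Fin (k * 4))) :=
  {s(vtx i 2, vtx (i + 1) 1), s(vtx i 3, vtx (i + 1) 0)}

def colorClass (i : Fin k) : Fin 4 → Finset (Sym2 (Fin (k * 4))) :=
  ![{innerEdge i 0, innerEdge i 2}, {innerEdge i 1}, linkClass i, {innerEdge i 3}]

theorem colorClass_two (i : Fin k) : colorClass i 2 = linkClass i := rfl

def coloring (c : Fin (k * 4)) : Finset (Sym2 (Fin (k * 4))) := colorClass (block c) (slot c)

@[simp] theorem coloring_vtx (i : Fin k) (r : Fin 4) : coloring (vtx i r) = colorClass i r := by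
  simp [coloring]

def graph : SimpleGraph (Fin (k * 4)) :=
  fromEdgeSet (⋃ c : Fin (k * 4), (coloring c : Set (Sym2 (Fin (k * 4)))))

theorem eq_of_mem_colorClass (hk : 2 ≤ k) {i j : Fin k} {r s : Fin 4} {e : Sym2 (Fin (k * 4))}
    (hi : e ∈ colorClass i r) (hj : e ∈ colorClass j s) : i = j ∧ r = s := by
  have hk1 : k ≠ 1 := by omega
  fin_cases r <;> fin_cases s <;>
    simp [colorClass, innerEdge, linkClass] at hi hj <;>
    rcases hi with rfl | rfl <;> simp_all [vtx_inj] <;> obtain ⟨rfl, h⟩ := hj <;> simp_all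

theorem isEdgeColoring_coloring (hk : 2 ≤ k) : IsEdgeColoring graph (coloring (k := k)) := by
  refine isEdgeColoring_fromEdgeSet_iUnion (fun c => ?_) (fun c c' hne => ?_) (fun c e he => ?_)
  · obtain ⟨i, r, rfl⟩ := exists_eq_vtx c
    fin_cases r <;> simp [colorClass, linkClass]
  · obtain ⟨i, r, rfl⟩ := exists_eq_vtx c
    obtain ⟨j, s, rfl⟩ := exists_eq_vtx c'
    refine Finset.disjoint_left.2 fun e hi hj => hne ?_
    rw [coloring_vtx] at hi hj
    obtain ⟨rfl, rfl⟩ := eq_of_mem_colorClass hk hi hj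
    rfl
  · obtain ⟨i, r, rfl⟩ := exists_eq_vtx c
    rw [coloring_vtx] at he
    fin_cases r <;> simp [colorClass, linkClass, innerEdge] at he <;>
      rcases he with rfl | rfl <;> simp [vtx_inj]

theorem mem_edgeSet_graph {e : Sym2 (Fin (k * 4))} (he : e ∈ (graph (k := k)).edgeSet) :
    (∃ i r, e = innerEdge i r) ∨ ∃ i, e ∈ linkClass i := by
  rw [graph, edgeSet_fromEdgeSet] at he
  obtain ⟨c, hc⟩ := Set.mem_iUnion.1 he.1
  obtain ⟨i, r, rfl⟩ := exists_eq_vtx c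
  rw [Finset.mem_coe, coloring_vtx] at hc
  fin_cases r <;> simp [colorClass] at hc
  · rcases hc with rfl | rfl <;> exact Or.inl ⟨_, _, rfl⟩
  · exact Or.inl ⟨_, _, hc⟩
  · exact Or.inr ⟨_, hc⟩
  · exact Or.inl ⟨_, _, hc⟩

theorem isMatching2_coloring {c : Fin (k * 4)} (hc : c ∈ matchingColors) :
    IsMatching2 (coloring c) := by
  obtain ⟨i, r, rfl⟩ := exists_eq_vtx c
  have hr : r = 0 ∨ r = 2 := by simpa [matchingColors, vtx] using hc
  rw [coloring_vtx]
  rcases hr with rfl | rfl <;> simp only [colorClass, linkClass, innerEdge, Matrix.cons_val] <;>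
    exact isMatching2_pair (by simp [vtx_inj]) (by simp [vtx_inj]) (by simp [vtx_inj])
      (by simp [vtx_inj])

theorem card_coloring_of_notMem {c : Fin (k * 4)} (hc : c ∉ matchingColors) :
    (coloring c).card = 1 := by
  obtain ⟨i, r, rfl⟩ := exists_eq_vtx c
  have hr : r ≠ 0 ∧ r ≠ 2 := by simpa [matchingColors, vtx] using hc
  rw [coloring_vtx]
  fin_cases r <;> simp_all [colorClass]

theorem mem_coloring_spine (j : Fin (k * 2)) :
    s(spine j, spine (j + 1)) ∈ coloring (spine j) := by
  obtain ⟨⟨i, e⟩, rfl⟩ := finProdFinEquiv.surjective j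
  fin_cases e
  · simp [finProdFinEquiv_zero_add_one, spine, colorClass, innerEdge]
  · simp [finProdFinEquiv_one_add_one, spine, colorClass, linkClass]

theorem exists_isCycle_isRainbow (hk : 2 ≤ k) :
    ∃ u, ∃ w : (graph (k := k)).Walk u u, w.IsCycle ∧ IsRainbow coloring w ∧ w.length = k * 2 := by
  have hcol := isEdgeColoring_coloring hk
  obtain ⟨u, w, hcyc, hlen, hedges⟩ := exists_isCycle_of_injective (by omega) spine
    spine_injective fun j => (mem_edgeSet _).1 (hcol.2.2.1 _ (mem_coloring_spine j))
  exact ⟨u, w, hcyc, isRainbow_of_injective hcol.2.1 spine spine_injective _ mem_coloring_spine w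
    hedges, hlen⟩

theorem abs_height_sub_le_one {x y : Fin (k * 4)} (he : s(x, y) ∈ (graph (k := k)).edgeSet)
    (hwrap : s(x, y) ∉ linkClass (-1)) : |height y - height x| ≤ 1 := by
  rcases mem_edgeSet_graph he with ⟨i, r, h⟩ | ⟨i, h⟩
  · rw [innerEdge, Sym2.eq_iff] at h
    rcases h with ⟨rfl, rfl⟩ | ⟨rfl, rfl⟩ <;> fin_cases r <;> simp
  · have hi : i ≠ -1 := by
      rintro rfl
      exact hwrap h
    have hval := Fin.val_add_one_of_ne_neg_one hi
    simp only [linkClass, Finset.mem_insert, Finset.mem_singleton, Sym2.eq_iff] at h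
    rcases h with (⟨rfl, rfl⟩ | ⟨rfl, rfl⟩) | (⟨rfl, rfl⟩ | ⟨rfl, rfl⟩) <;>
      simp [hval, abs_le] <;> omega

theorem abs_height_sub_of_mem_linkClass_neg_one {x y : Fin (k * 4)}
    (h : s(x, y) ∈ linkClass (-1)) : |height y - height x| = k * 2 - 1 := by
  have hval : (((-1 : Fin k) : ℕ) : ℤ) = k - 1 := by
    have := Fin.val_neg_one_add_one (m := k)
    omega
  simp only [linkClass, neg_add_cancel, Finset.mem_insert, Finset.mem_singleton,
    Sym2.eq_iff] at h
  rcases h with (⟨rfl, rfl⟩ | ⟨rfl, rfl⟩) | (⟨rfl, rfl⟩ | ⟨rfl, rfl⟩) <;>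
    simp only [height_vtx, hval, Fin.val_zero] <;> rw [abs_eq (by omega)] <;> omega

theorem mem_linkClass_of_block_le_of_lt {x y : Fin (k * 4)}
    (he : s(x, y) ∈ (graph (k := k)).edgeSet) {i : Fin k} (hx : block x ≤ i) (hy : i < block y) :
    s(x, y) ∈ linkClass i ∨ s(x, y) ∈ linkClass (-1) := by
  rcases mem_edgeSet_graph he with ⟨j, r, h⟩ | ⟨j, h⟩
  · rw [innerEdge, Sym2.eq_iff] at h
    rcases h with ⟨rfl, rfl⟩ | ⟨rfl, rfl⟩ <;> simp at hx hy <;>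
      exact absurd (hx.trans_lt hy) (lt_irrefl _)
  · by_cases hj : j = -1
    · exact Or.inr (hj ▸ h)
    have hval := Fin.val_add_one_of_ne_neg_one hj
    refine Or.inl ?_
    simp only [linkClass, Finset.mem_insert, Finset.mem_singleton, Sym2.eq_iff] at h
    rcases h with (⟨rfl, rfl⟩ | ⟨rfl, rfl⟩) | (⟨rfl, rfl⟩ | ⟨rfl, rfl⟩) <;>
      simp only [block_vtx, Fin.le_def, Fin.lt_def, hval] at hx hy
    all_goals obtain rfl : j = i := Fin.ext (by omega)
    all_goals simp [linkClass]

theorem eq_innerEdge_of_vtx_mem {e : Sym2 (Fin (k * 4))} (he : e ∈ (graph (k := k)).edgeSet)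
    (hlink : ∀ j, e ∉ linkClass j) {i : Fin k} {r : Fin 4} (hx : vtx i r ∈ e) :
    e = innerEdge i r ∨ e = innerEdge i (r - 1) := by
  rcases mem_edgeSet_graph he with ⟨j, s, rfl⟩ | ⟨j, h⟩
  · rw [innerEdge, Sym2.mem_iff, vtx_inj, vtx_inj] at hx
    rcases hx with ⟨rfl, rfl⟩ | ⟨rfl, rfl⟩
    · exact Or.inl rfl
    · exact Or.inr (by simp)
  · exact absurd h (hlink j)

variable {u : Fin (k * 4)} {p : (graph (k := k)).Walk u u}

theorem le_length_of_mem_linkClass_neg_one (hp : p.IsTrail) (hrb : IsRainbow coloring p)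
    {e : Sym2 (Fin (k * 4))} (he : e ∈ p.edges) (hwrap : e ∈ linkClass (-1)) :
    k * 2 ≤ p.length := by
  induction e using Sym2.ind with
  | h a b =>
    have hbound := hp.abs_sub_add_one_le_length height he fun x y hxy hne => by
      refine abs_height_sub_le_one (p.edges_subset_edgeSet hxy) fun hx => hne ?_
      exact hrb (vtx (-1) 2) _ hxy _ he (by simpa [colorClass_two] using hx)
        (by simpa [colorClass_two] using hwrap)
    rw [abs_height_sub_of_mem_linkClass_neg_one hwrap] at hbound
    omega

theorem exists_mem_linkClass_neg_one (hp : p.IsTrail) (hrb : IsRainbow coloring p)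
    {e : Sym2 (Fin (k * 4))} (he : e ∈ p.edges) {i : Fin k} (hi : e ∈ linkClass i) :
    ∃ e' ∈ p.edges, e' ∈ linkClass (-1) := by
  by_cases hwrap : i = -1
  · exact ⟨e, he, hwrap ▸ hi⟩
  have hval := Fin.val_add_one_of_ne_neg_one hwrap
  have hcross : ∀ {a b : Fin (k * 4)}, s(a, b) ∈ p.edges → s(a, b) ∈ linkClass i → block a = i →
      block b = i + 1 → ∃ e' ∈ p.edges, e' ∈ linkClass (-1) := by
    intro a b hab habi ha hb
    obtain ⟨x, y, hxy, hne, hx, hy⟩ := hp.exists_mem_edges_crossing {x | block x ≤ i} hab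
      (show block a ≤ i from ha.le) (show ¬block b ≤ i by simp [hb, Fin.le_def, hval])
    rcases mem_linkClass_of_block_le_of_lt (p.edges_subset_edgeSet hxy) hx (not_le.1 hy)
      with h | h
    · exact absurd (hrb (vtx i 2) _ hxy _ hab (by simpa [colorClass_two] using h)
        (by simpa [colorClass_two] using habi)) hne
    · exact ⟨_, hxy, h⟩
  simp only [linkClass, Finset.mem_insert, Finset.mem_singleton] at hi
  rcases hi with rfl | rfl <;>
    exact hcross he (by simp [linkClass]) (block_vtx _ _) (block_vtx _ _)

theorem not_isRainbow_of_forall_notMem_linkClass (hp : p.IsCycle)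
    (hlink : ∀ e ∈ p.edges, ∀ j, e ∉ linkClass j) : ¬IsRainbow coloring p := by
  intro hrb
  obtain ⟨e, he⟩ := List.exists_mem_of_ne_nil _ (Walk.edges_eq_nil.not.2 hp.not_nil)
  obtain ⟨i, r, rfl⟩ := (mem_edgeSet_graph (p.edges_subset_edgeSet he)).resolve_right
    fun ⟨j, hj⟩ => hlink _ he j hj
  have step : ∀ r, innerEdge i r ∈ p.edges → innerEdge i (r + 1) ∈ p.edges := by
    intro r hr
    rw [innerEdge, Sym2.eq_swap] at hr
    obtain ⟨c, hc, hne⟩ := hp.isTrail.exists_mem_edges_ne hr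
    rcases eq_innerEdge_of_vtx_mem (p.edges_subset_edgeSet hc) (hlink _ hc) (Sym2.mem_mk_left _ _)
      with h | h
    · rwa [← h]
    · rw [add_sub_cancel_right] at h
      exact absurd (h.trans Sym2.eq_swap) hne
  have hall : ∀ t : Fin 4, innerEdge i (r + t) ∈ p.edges := by
    intro t
    fin_cases t
    · simpa using he
    · exact step _ he
    · simpa [add_assoc, one_add_one_eq_two] using step _ (step _ he)
    · simpa [add_assoc] using step _ (step _ (step _ he))
  have h0 := hall (-r)
  have h2 := hall (2 - r)
  simp only [add_neg_cancel, add_sub_cancel] at h0 h2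
  have := hrb (vtx i 0) _ h0 _ h2 (by simp [colorClass]) (by simp [colorClass])
  simp [innerEdge, vtx_inj] at this

theorem le_length_of_isCycle_of_isRainbow (hp : p.IsCycle) (hrb : IsRainbow coloring p) :
    k * 2 ≤ p.length := by
  by_cases hlink : ∃ e ∈ p.edges, ∃ i, e ∈ linkClass i
  · obtain ⟨e, he, i, hi⟩ := hlink
    obtain ⟨e', he', hwrap⟩ := exists_mem_linkClass_neg_one hp.isTrail hrb he hi
    exact le_length_of_mem_linkClass_neg_one hp.isTrail hrb he' hwrap
  · exact absurd hrb (not_isRainbow_of_forall_notMem_linkClass hp fun e he i hi =>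
      hlink ⟨e, he, i, hi⟩)

end RainbowBlocks

/-- For every `n ≥ 8` divisible by 4 there is a graph `G` on `n` vertices with
an edge coloring into `n` color classes, exactly `n/2` of which are matchings
of size 2 and exactly `n/2` of which are single edges, whose rainbow girth is
exactly `n/2`. -/
theorem statement_5 (n : ℕ) (hn : 8 ≤ n) (hdvd : 4 ∣ n) :
    ∃ (G : SimpleGraph (Fin n)) (F : Fin n → Finset (Sym2 (Fin n)))
      (T : Finset (Fin n)),
      IsEdgeColoring G F ∧
      T.card = n / 2 ∧
      (∀ i ∈ T, IsMatching2 (F i)) ∧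
      (∀ i ∉ T, (F i).card = 1) ∧
      (∃ (u : Fin n) (w : G.Walk u u), w.IsCycle ∧ IsRainbow F w ∧
        w.length = n / 2) ∧
      (∀ (u : Fin n) (w : G.Walk u u), w.IsCycle → IsRainbow F w →
        n / 2 ≤ w.length) := by
  obtain ⟨k, rfl⟩ : ∃ k, n = k * 4 := ⟨n / 4, by omega⟩
  have hk : 2 ≤ k := by omega
  have : NeZero k := ⟨by omega⟩
  have hhalf : k * 4 / 2 = k * 2 := by omega
  open RainbowBlocks in
  refine ⟨graph, coloring, matchingColors, isEdgeColoring_coloring hk,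
    card_matchingColors.trans hhalf.symm, fun c hc => isMatching2_coloring hc,
    fun c hc => card_coloring_of_notMem hc, hhalf ▸ exists_isCycle_isRainbow hk,
    fun u p hp hrb => hhalf ▸ le_length_of_isCycle_of_isRainbow hp hrb⟩
end

section
/- Let G be a graph with an edge coloring in which every color class is either a single edge or a triangle class. If G contains a cycle of length ℓ whose edge set is not equal to a single color class, then G contains a rainbow cycle of length at most ℓ. -/
/-!
Induct on the length of the cycle. A cycle that is not rainbow has two edges in one class,
which must then be a triangle class `{xy, xz, yz}`. Read from `x`, the cycle is `x, y, …, z, x`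
(up to orientation) with an inner `y`–`z` path avoiding `x`. Either that path is the single edge
`yz`, and the cycle is the triangle itself, a colour class; or closing it up with `yz` gives a
shorter cycle that meets the class in `yz` but misses `xy`, hence is again not a colour class.
-/

open Finset SimpleGraph
open scoped Classical

open Function

namespace SimpleGraph.Walk

variable {V : Type*} {G : SimpleGraph V}

lemma IsCycle.exists_eq_cons_concat {x : V} {c : G.Walk x x} (hc : c.IsCycle) :
    ∃ (a b : V) (hxa : G.Adj x a) (hbx : G.Adj b x) (q : G.Walk a b),
      q.IsPath ∧ x ∉ q.support ∧ c = cons hxa (q.concat hbx) := by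
  cases c with
  | nil => exact absurd hc not_isCycle_nil
  | cons hxa p =>
    have hbx := adj_penultimate (not_nil_of_isCycle_cons hc)
    have hp : (p.dropLast.concat hbx).IsPath := by
      rw [concat_dropLast]
      exact ((cons_isCycle_iff p hxa).mp hc).1
    obtain ⟨hq, hxq⟩ := (concat_isPath_iff hbx).mp hp
    exact ⟨_, _, hxa, hbx, _, hq, hxq, by rw [concat_dropLast]⟩

lemma IsCycle.edges_toFinset_eq_triangle_or_exists_shorter {x y z : V} {c : G.Walk x x}
    (hc : c.IsCycle) (hyz : G.Adj y z) (hy : s(x, y) ∈ c.edges) (hz : s(x, z) ∈ c.edges) :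
    c.edges.toFinset = {s(x, y), s(x, z), s(y, z)} ∨
      ∃ (v : V) (c' : G.Walk v v), c'.IsCycle ∧ c'.length < c.length ∧
        s(y, z) ∈ c'.edges ∧ x ∉ c'.support := by
  obtain ⟨a, b, hxa, hbx, q, hq, hxq, rfl⟩ := hc.exists_eq_cons_concat
  have hnbr : ∀ {v}, s(x, v) ∈ (cons hxa (q.concat hbx)).edges → v = a ∨ v = b := by
    intro v hv
    simp only [edges_cons, edges_concat, List.concat_eq_append, List.mem_cons, List.mem_append,
      List.not_mem_nil, or_false] at hv
    rcases hv with hv | hv | hv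
    · exact .inl (Sym2.congr_right.mp hv)
    · exact absurd (q.fst_mem_support_of_mem_edges hv) hxq
    · exact .inr (Sym2.congr_right.mp (hv.trans Sym2.eq_swap))
  have hyz' : s(y, z) = s(a, b) := by
    rcases hnbr hy with rfl | rfl <;> rcases hnbr hz with rfl | rfl
    all_goals first | exact absurd rfl hyz.ne | simp [Sym2.eq_swap]
  have hab : G.Adj a b := by rw [← G.mem_edgeSet, ← hyz']; exact hyz
  by_cases hq1 : s(a, b) ∈ q.edges
  · left
    rw [hyz', hq.eq_adj_toWalk_of_mem_edges hq1]
    rcases hnbr hy with rfl | rfl <;> rcases hnbr hz with rfl | rfl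
    all_goals first | exact absurd rfl hyz.ne | (ext; simp [Sym2.eq_swap]; tauto)
  · right
    refine ⟨b, cons hab.symm q, (cons_isCycle_iff q hab.symm).mpr ⟨hq, ?_⟩, by simp, ?_, ?_⟩
    · rwa [Sym2.eq_swap]
    · simp [hyz', Sym2.eq_swap]
    · simp [hbx.ne.symm, hxq]

end SimpleGraph.Walk

lemma IsTriangleClass.exists_apex {V : Type*} {G : SimpleGraph V} {T : Finset (Sym2 V)}
    (hT : IsTriangleClass G T) {e₁ e₂ : Sym2 V} (h₁ : e₁ ∈ T) (h₂ : e₂ ∈ T) (hne : e₁ ≠ e₂) :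
    ∃ x y z, G.Adj y z ∧ e₁ = s(x, y) ∧ e₂ = s(x, z) ∧ T = {s(x, y), s(x, z), s(y, z)} := by
  obtain ⟨a, b, c, hab, hac, hbc, rfl⟩ := hT
  simp only [mem_insert, mem_singleton] at h₁ h₂
  rcases h₁ with rfl | rfl | rfl <;> rcases h₂ with rfl | rfl | rfl
  all_goals try exact absurd rfl hne
  · exact ⟨a, b, c, hbc, rfl, rfl, rfl⟩
  · exact ⟨b, a, c, hac, Sym2.eq_swap, rfl, by grind [Sym2.eq_swap]⟩
  · exact ⟨a, c, b, hbc.symm, rfl, rfl, by grind [Sym2.eq_swap]⟩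
  · exact ⟨c, a, b, hab, Sym2.eq_swap, Sym2.eq_swap, by grind [Sym2.eq_swap]⟩
  · exact ⟨b, c, a, hac.symm, rfl, Sym2.eq_swap, by grind [Sym2.eq_swap]⟩
  · exact ⟨c, b, a, hab.symm, Sym2.eq_swap, Sym2.eq_swap, by grind [Sym2.eq_swap]⟩

lemma Pairwise.ne_of_mem_of_not_mem {ι α : Type*} {F : ι → Finset α}
    (hF : Pairwise (Disjoint on F)) {s : Finset α} {i : ι} {e e' : α}
    (he : e ∈ s) (heF : e ∈ F i) (he' : e' ∉ s) (he'F : e' ∈ F i) (j : ι) : s ≠ F j := by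
  rintro rfl
  obtain rfl : i = j := by_contra fun hij => disjoint_left.mp (hF hij) heF he
  exact he' he'F

lemma exists_shorter_cycle_of_not_isRainbow {V ι : Type*} {G : SimpleGraph V}
    {F : ι → Finset (Sym2 V)} (hdisj : Pairwise (Disjoint on F))
    (hclass : ∀ i, (F i).card = 1 ∨ IsTriangleClass G (F i))
    {u : V} {w : G.Walk u u} (hw : w.IsCycle) (hne : ¬ ∃ i, w.edges.toFinset = F i)
    (hr : ¬ IsRainbow F w) :
    ∃ (v : V) (c : G.Walk v v), c.IsCycle ∧ c.length < w.length ∧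
      ¬ ∃ i, c.edges.toFinset = F i := by
  obtain ⟨i, e₁, h₁w, e₂, h₂w, h₁, h₂, h₁₂⟩ : ∃ i, ∃ e₁ ∈ w.edges, ∃ e₂ ∈ w.edges,
      e₁ ∈ F i ∧ e₂ ∈ F i ∧ e₁ ≠ e₂ := by simpa [IsRainbow] using hr
  have hT : IsTriangleClass G (F i) :=
    (hclass i).resolve_left fun h => h₁₂ (card_le_one.mp h.le e₁ h₁ e₂ h₂)
  obtain ⟨x, y, z, hyz, rfl, rfl, hFi⟩ := hT.exists_apex h₁ h₂ h₁₂
  have hx : x ∈ w.support := w.fst_mem_support_of_mem_edges h₁w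
  have hrot : ∀ e, e ∈ (w.rotate x hx).edges ↔ e ∈ w.edges :=
    fun _ => (w.rotate_edges x hx).perm.mem_iff
  rcases (hw.rotate hx).edges_toFinset_eq_triangle_or_exists_shorter hyz ((hrot _).2 h₁w)
    ((hrot _).2 h₂w) with htri | ⟨v, c, hc, hlt, hyzc, hxc⟩
  · refine absurd ⟨i, ?_⟩ hne
    rw [hFi, ← htri]
    ext
    simp [hrot]
  · refine ⟨v, c, hc, by simpa using hlt, fun ⟨j, hj⟩ => hdisj.ne_of_mem_of_not_mem
      (List.mem_toFinset.mpr hyzc) (by simp [hFi]) ?_ (by simp [hFi] : s(x, y) ∈ F i) j hj⟩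
    exact fun h => hxc (c.fst_mem_support_of_mem_edges (List.mem_toFinset.mp h))

/-- If `G` has an edge coloring in which every color class is a single edge or
a triangle class, and `G` contains a cycle of length `ℓ` whose edge set is not
equal to a single color class, then `G` contains a rainbow cycle of length at
most `ℓ`. -/
theorem statement_8 {V : Type*} {m : ℕ} (G : SimpleGraph V)
    (F : Fin m → Finset (Sym2 V))
    (hF : IsEdgeColoring G F)
    (hclass : ∀ i, (F i).card = 1 ∨ IsTriangleClass G (F i))
    (ℓ : ℕ) (u : V) (w : G.Walk u u) (hw : w.IsCycle) (hlen : w.length = ℓ)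
    (hne : ¬ ∃ i, w.edges.toFinset = F i) :
    ∃ (v : V) (w' : G.Walk v v), w'.IsCycle ∧ IsRainbow F w' ∧ w'.length ≤ ℓ := by
  induction ℓ using Nat.strong_induction_on generalizing u w with
  | _ n ih =>
  by_cases hr : IsRainbow F w
  · exact ⟨u, w, hw, hr, hlen.le⟩
  obtain ⟨v, c, hc, hlt, hcne⟩ :=
    exists_shorter_cycle_of_not_isRainbow hF.2.1 hclass hw hne hr
  obtain ⟨v', w', hw', hr', hle⟩ := ih _ (hlen ▸ hlt) v c hc rfl hcne
  exact ⟨v', w', hw', hr', hle.trans (hlen ▸ hlt).le⟩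
end

section
/- Let G be a graph on n vertices and let M_1, …, M_m be pairwise disjoint matchings of size 2 in G (pairwise disjoint as sets of edges). Then there is a choice of one edge e_i ∈ M_i for each 1 ≤ i ≤ m such that the set of vertices incident to at least one of the chosen edges e_1, …, e_m has size at most n·(1 − (1/2)^{4m/n}). -/
open Finset SimpleGraph
open scoped Classical

/-!
Pick one edge of each matching independently and uniformly at random. A vertex lying on the
edges of `d` of the matchings lies on exactly one edge of each of them, so it stays uncovered
with probability `2^{-d}`. The degrees `d` sum to at most `4m`, so by convexity of `t ↦ 2^{-t}`
the expected number of uncovered vertices is at least `n · 2^{-4m/n}`, and some choice is at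
least as good as the expectation. The probability is replaced by counting over all choices.
-/

theorem Real.card_mul_rpow_sum_div_card_le_sum_rpow {ι : Type*} (s : Finset ι) {b : ℝ}
    (hb : 0 < b) (x : ι → ℝ) :
    #s * b ^ ((∑ i ∈ s, x i) / #s) ≤ ∑ i ∈ s, b ^ x i := by
  rcases s.eq_empty_or_nonempty with rfl | hs
  · simp
  have hcard : (0 : ℝ) < #s := by exact_mod_cast hs.card_pos
  have jensen := (convexOn_rpow_left hb).map_sum_le (t := s) (w := fun _ => (#s : ℝ)⁻¹)
    (p := x) (fun _ _ => by positivity) (by simp [hcard.ne']) (fun _ _ => Set.mem_univ _)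
  simp only [smul_eq_mul, ← Finset.mul_sum] at jensen
  rw [div_eq_inv_mul]
  calc (#s : ℝ) * b ^ ((#s : ℝ)⁻¹ * ∑ i ∈ s, x i)
      ≤ #s * ((#s : ℝ)⁻¹ * ∑ i ∈ s, b ^ x i) := by gcongr
    _ = ∑ i ∈ s, b ^ x i := by field_simp

section ChoiceFromPairs

variable {V ι : Type*} [Fintype ι] (A B : ι → Finset V)

-- The count `2 ^ (card ι - d)`, multiplied out to avoid truncated subtraction.
theorem card_filter_notMem_biUnion_cond_mul_two_pow (hAB : ∀ i, Disjoint (A i) (B i)) (v : V) :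
    #{σ : ι → Bool | v ∉ univ.biUnion fun i => cond (σ i) (A i) (B i)} *
      2 ^ #{i | v ∈ A i ∪ B i} = 2 ^ Fintype.card ι := by
  have hpi : ({σ : ι → Bool | v ∉ univ.biUnion fun i => cond (σ i) (A i) (B i)} : Finset _) =
      Fintype.piFinset fun i => {c : Bool | v ∉ cond c (A i) (B i)} := by
    ext σ; simp
  have hfactor (i : ι) :
      #{c : Bool | v ∉ cond c (A i) (B i)} * (if v ∈ A i ∪ B i then 2 else 1) = 2 := by
    rw [Finset.card_filter, Fintype.sum_bool]
    by_cases hA : v ∈ A i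
    · simp [hA, Finset.disjoint_left.mp (hAB i) hA]
    · by_cases hB : v ∈ B i <;> simp [hA, hB]
  rw [hpi, Fintype.card_piFinset, ← Finset.prod_const, Finset.prod_filter,
    ← Finset.prod_mul_distrib, Finset.prod_congr rfl fun i _ => hfactor i, Finset.prod_const,
    Finset.card_univ]

variable [Fintype V]

theorem sum_card_compl_biUnion_cond (hAB : ∀ i, Disjoint (A i) (B i)) :
    ∑ σ : ι → Bool, (#(univ.biUnion fun i => cond (σ i) (A i) (B i))ᶜ : ℝ) =
      2 ^ Fintype.card ι * ∑ v, (1 / 2 : ℝ) ^ #{i | v ∈ A i ∪ B i} := by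
  have hcount : ∑ σ : ι → Bool, #(univ.biUnion fun i => cond (σ i) (A i) (B i))ᶜ =
      ∑ v, #{σ : ι → Bool | v ∉ univ.biUnion fun i => cond (σ i) (A i) (B i)} := by
    simp only [Finset.compl_eq_univ_sdiff, Finset.sdiff_eq_filter, Finset.card_filter]
    exact Finset.sum_comm
  rw [← Nat.cast_sum, hcount, Nat.cast_sum, Finset.mul_sum]
  refine Finset.sum_congr rfl fun v _ => ?_
  have h := congrArg (Nat.cast (R := ℝ)) (card_filter_notMem_biUnion_cond_mul_two_pow A B hAB v)
  push_cast at h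
  rw [← h, one_div, inv_pow, mul_inv_cancel_right₀ (by positivity)]

theorem sum_card_filter_mem_union_le :
    ∑ v, #{i | v ∈ A i ∪ B i} ≤ ∑ i, (#(A i) + #(B i)) := by
  have hcount : ∑ v, #{i | v ∈ A i ∪ B i} = ∑ i, #(A i ∪ B i) := by
    simp only [Finset.card_filter]
    rw [Finset.sum_comm]
    simp only [← Finset.card_filter, Finset.filter_mem_eq_inter, Finset.univ_inter]
  rw [hcount]
  exact Finset.sum_le_sum fun i _ => Finset.card_union_le _ _

theorem exists_card_biUnion_cond_le (hAB : ∀ i, Disjoint (A i) (B i)) {k : ℝ}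
    (hk : ((∑ i, (#(A i) + #(B i)) : ℕ) : ℝ) ≤ k) :
    ∃ σ : ι → Bool, (#(univ.biUnion fun i => cond (σ i) (A i) (B i)) : ℝ) ≤
      Fintype.card V * (1 - (1 / 2 : ℝ) ^ (k / Fintype.card V)) := by
  set n : ℝ := (Fintype.card V : ℝ)
  have hdeg : n * (1 / 2 : ℝ) ^ (k / n) ≤ ∑ v, (1 / 2 : ℝ) ^ #{i | v ∈ A i ∪ B i} := by
    have hsum : ((∑ v, #{i | v ∈ A i ∪ B i} : ℕ) : ℝ) ≤ k :=
      le_trans (by exact_mod_cast sum_card_filter_mem_union_le A B) hk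
    calc n * (1 / 2 : ℝ) ^ (k / n)
        ≤ n * (1 / 2 : ℝ) ^ ((∑ v, (#{i | v ∈ A i ∪ B i} : ℝ)) / n) := by
          push_cast at hsum
          refine mul_le_mul_of_nonneg_left ?_ (Nat.cast_nonneg _)
          exact Real.rpow_le_rpow_of_exponent_ge (by norm_num) (by norm_num) (by gcongr)
      _ ≤ ∑ v, (1 / 2 : ℝ) ^ (#{i | v ∈ A i ∪ B i} : ℝ) :=
          Real.card_mul_rpow_sum_div_card_le_sum_rpow univ (by norm_num) _
      _ = ∑ v, (1 / 2 : ℝ) ^ #{i | v ∈ A i ∪ B i} := by simp only [Real.rpow_natCast]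
  obtain ⟨σ, -, hσ⟩ := Finset.exists_le_of_sum_le (univ_nonempty (α := ι → Bool))
    (f := fun _ => n * (1 / 2 : ℝ) ^ (k / n))
    (g := fun σ => (#(univ.biUnion fun i => cond (σ i) (A i) (B i))ᶜ : ℝ)) (by
      rw [sum_card_compl_biUnion_cond A B hAB, Finset.sum_const, Finset.card_univ,
        Fintype.card_fun, Fintype.card_bool, nsmul_eq_mul]
      push_cast
      gcongr)
  refine ⟨σ, ?_⟩
  rw [Finset.card_compl, Nat.cast_sub (Finset.card_le_univ _)] at hσ
  linarith

end ChoiceFromPairs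

theorem Sym2.card_toFinset_le_two {α : Type*} [DecidableEq α] (z : Sym2 α) :
    #z.toFinset ≤ 2 := by
  rw [Sym2.card_toFinset]
  split_ifs <;> norm_num

theorem statement_12_general (n m : ℕ)
    (M : Fin m → Finset (Sym2 (Fin n)))
    (hmatch : ∀ i, IsMatching2 (M i)) :
    ∃ e : Fin m → Sym2 (Fin n), (∀ i, e i ∈ M i) ∧
      (((univ.filter fun v : Fin n => ∃ i, v ∈ e i).card : ℝ) ≤
        n * (1 - (1 / 2 : ℝ) ^ ((4 * m : ℝ) / n))) := by
  choose a b hab hM using fun i => Finset.card_eq_two.mp (hmatch i).1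
  have hdisj (i : Fin m) : Disjoint (a i).toFinset (b i).toFinset := by
    refine Finset.disjoint_left.mpr fun v hva hvb => ?_
    exact (hmatch i).2 (a i) (by simp [hM]) (b i) (by simp [hM]) (hab i) v
      (Sym2.mem_toFinset.mp hva) (Sym2.mem_toFinset.mp hvb)
  have hcard : ∑ i, (#(a i).toFinset + #(b i).toFinset) ≤ 4 * m := by
    calc ∑ i, (#(a i).toFinset + #(b i).toFinset) ≤ ∑ _i : Fin m, (2 + 2) :=
          Finset.sum_le_sum fun i _ =>
            add_le_add (a i).card_toFinset_le_two (b i).card_toFinset_le_two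
      _ = 4 * m := by simp [mul_comm]
  obtain ⟨σ, hσ⟩ := exists_card_biUnion_cond_le (fun i => (a i).toFinset)
    (fun i => (b i).toFinset) hdisj (k := 4 * m) (by exact_mod_cast hcard)
  refine ⟨fun i => cond (σ i) (a i) (b i), ?_, ?_⟩
  · intro i
    rw [hM]
    cases h : σ i <;> simp [h]
  convert hσ using 3
  · ext v
    simp only [mem_filter, mem_univ, true_and, mem_biUnion, ← Bool.apply_cond Sym2.toFinset,
      Sym2.mem_toFinset]
  all_goals simp

/-- If `M_1, …, M_m` are pairwise disjoint matchings of size 2 in a graph `G`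
on `n` vertices, then one can choose one edge `e_i ∈ M_i` from each matching so
that the set of vertices incident to at least one chosen edge has size at most
`n·(1 − (1/2)^{4m/n})`. -/
theorem statement_12 (n m : ℕ) (G : SimpleGraph (Fin n))
    (M : Fin m → Finset (Sym2 (Fin n)))
    (hsub : ∀ i, (M i : Set (Sym2 (Fin n))) ⊆ G.edgeSet)
    (hmatch : ∀ i, IsMatching2 (M i))
    (hdisj : ∀ i j : Fin m, i ≠ j → Disjoint (M i) (M j)) :
    ∃ e : Fin m → Sym2 (Fin n), (∀ i, e i ∈ M i) ∧
      (((univ.filter fun v : Fin n => ∃ i, v ∈ e i).card : ℝ) ≤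
        n * (1 - (1 / 2 : ℝ) ^ ((4 * m : ℝ) / n))) :=
  statement_12_general n m M hmatch
end

section
/- Let p ∈ [1/2, 1) and ε > 0 be real constants. Let G be a graph on n vertices with an edge coloring F = F_M ⊔ F_E in which every color class in F_M is a matching of size 2, every color class in F_E is a single edge, n/40 ≤ |F_M| ≤ n, and |F_E| ≤ n. Call a vertex heavy if it is incident to at least (ε²/10⁶)·n edges of (∪F_M) ∪ (∪F_E), and let D be the set of heavy vertices. Let S be the random vertex set obtained as the union of D with a random subset of V(G) \ D that contains each vertex independently with probability p. Then for all sufficiently large n, with probability at least 0.9 the number of color classes in F_M having at least one edge with both endpoints in S is at least (1 − ε)·|F_M|·(2p² − p⁴). -/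
open Finset SimpleGraph
open scoped Classical

/-!
Second moment method. Let `X = ∑ Xᵢ` over the classes `i ∈ F_M`, where `Xᵢ` indicates that
class `i` has an edge inside `S`. The two edges of a class are vertex-disjoint, so if `a, b ≤ 2`
of their endpoints lie outside `D`, then `E Xᵢ = pᵃ + pᵇ - pᵃ⁺ᵇ ≥ 2p² - p⁴`. Moreover `Xᵢ` only
depends on `S` at the at most four endpoints of class `i` outside `D`, so `Xᵢ` and `Xⱼ` are
independent unless these endpoint sets meet. A vertex outside `D` lies in fewer than
`ε²n/10⁶` classes, since the classes are disjoint, hence `Var X ≤ 4 |F_M| ε² n / 10⁶`, which is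
tiny compared with `(ε |F_M| (2p² - p⁴))² ≥ ε² |F_M| (n/40) (7/16)²`. Chebyshev's inequality
finishes the proof.
-/

namespace Finset

variable {V : Type*} [DecidableEq V]

theorem union_inter_eq_left_of_disjoint {t u A : Finset V} (ht : t ⊆ A) (hu : Disjoint u A) :
    (t ∪ u) ∩ A = t := by
  rw [union_inter_distrib_right, inter_eq_left.2 ht, disjoint_iff_inter_eq_empty.1 hu, union_empty]

theorem union_inter_eq_right_of_disjoint {t u A : Finset V} (ht : Disjoint t A) (hu : u ⊆ A) :
    (t ∪ u) ∩ A = u := by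
  rw [union_comm, union_inter_eq_left_of_disjoint hu ht]

theorem sum_powerset_union_of_disjoint {M : Type*} [AddCommMonoid M] {T U : Finset V}
    (h : Disjoint T U) (f : Finset V → M) :
    ∑ s ∈ (T ∪ U).powerset, f s = ∑ t ∈ T.powerset, ∑ u ∈ U.powerset, f (t ∪ u) := by
  rw [← sum_product']
  refine (sum_nbij' (fun x => x.1 ∪ x.2) (fun s => (s ∩ T, s ∩ U)) ?_ ?_ ?_ ?_ ?_).symm
  · simp only [mem_product, mem_powerset, and_imp, Prod.forall]
    exact fun t u ht hu => union_subset_union ht hu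
  · simp only [mem_powerset, mem_product]
    exact fun s _ => ⟨inter_subset_right, inter_subset_right⟩
  · simp only [mem_product, mem_powerset, Prod.forall, Prod.mk.injEq, and_imp]
    exact fun t u ht hu => ⟨union_inter_eq_left_of_disjoint ht (disjoint_of_subset_left hu h.symm),
      union_inter_eq_right_of_disjoint (disjoint_of_subset_left ht h) hu⟩
  · simp only [mem_powerset]
    intro s hs
    rw [← inter_union_distrib_left, inter_eq_left.2 hs]
  · simp

end Finset

section BernoulliSubset

variable {V : Type*}

/-- The probability that the random subset of `R`, containing each element independently with
probability `p`, equals `s ⊆ R`. -/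
noncomputable def bernoulliWeight (p : ℝ) (R s : Finset V) : ℝ :=
  p ^ s.card * (1 - p) ^ (R.card - s.card)

noncomputable def bernoulliExpect (p : ℝ) (R : Finset V) (f : Finset V → ℝ) : ℝ :=
  ∑ s ∈ R.powerset, bernoulliWeight p R s * f s

variable {p : ℝ} {R : Finset V} {f g : Finset V → ℝ}

lemma bernoulliWeight_nonneg (hp0 : 0 ≤ p) (hp1 : p ≤ 1) (R s : Finset V) :
    0 ≤ bernoulliWeight p R s :=
  mul_nonneg (pow_nonneg hp0 _) (pow_nonneg (sub_nonneg.2 hp1) _)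

lemma bernoulliWeight_union [DecidableEq V] {T U t u : Finset V} (h : Disjoint T U) (ht : t ⊆ T)
    (hu : u ⊆ U) :
    bernoulliWeight p (T ∪ U) (t ∪ u) = bernoulliWeight p T t * bernoulliWeight p U u := by
  have htu : Disjoint t u := disjoint_of_subset_left ht (disjoint_of_subset_right hu h)
  have := card_le_card ht
  have := card_le_card hu
  rw [bernoulliWeight, bernoulliWeight, bernoulliWeight, card_union_of_disjoint h,
    card_union_of_disjoint htu,
    show #T + #U - (#t + #u) = (#T - #t) + (#U - #u) by omega, pow_add, pow_add]
  ring

lemma bernoulliExpect_congr (h : ∀ s ⊆ R, f s = g s) :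
    bernoulliExpect p R f = bernoulliExpect p R g :=
  sum_congr rfl fun s hs => by rw [h s (mem_powerset.1 hs)]

lemma bernoulliExpect_mono (hp0 : 0 ≤ p) (hp1 : p ≤ 1) (h : ∀ s ⊆ R, f s ≤ g s) :
    bernoulliExpect p R f ≤ bernoulliExpect p R g :=
  sum_le_sum fun s hs =>
    mul_le_mul_of_nonneg_left (h s (mem_powerset.1 hs)) (bernoulliWeight_nonneg hp0 hp1 R s)

lemma bernoulliExpect_const (p c : ℝ) (R : Finset V) :
    bernoulliExpect p R (fun _ => c) = c := by
  have hmass : ∑ s ∈ R.powerset, bernoulliWeight p R s = 1 := by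
    have := prod_add (fun _ : V => p) (fun _ : V => 1 - p) R
    rw [prod_const, add_sub_cancel, one_pow] at this
    rw [this]
    refine sum_congr rfl fun s hs => ?_
    rw [bernoulliWeight, prod_const, prod_const, card_sdiff_of_subset (mem_powerset.1 hs)]
  rw [bernoulliExpect, ← sum_mul, hmass, one_mul]

lemma bernoulliExpect_nonneg (hp0 : 0 ≤ p) (hp1 : p ≤ 1) (hf : ∀ s, 0 ≤ f s) :
    0 ≤ bernoulliExpect p R f := by
  simpa [bernoulliExpect_const] using
    bernoulliExpect_mono (R := R) (f := fun _ => 0) hp0 hp1 fun s _ => hf s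

lemma bernoulliExpect_add :
    bernoulliExpect p R (f + g) = bernoulliExpect p R f + bernoulliExpect p R g := by
  simp only [bernoulliExpect, Pi.add_apply, mul_add, sum_add_distrib]

lemma bernoulliExpect_sub :
    bernoulliExpect p R (f - g) = bernoulliExpect p R f - bernoulliExpect p R g := by
  simp only [bernoulliExpect, Pi.sub_apply, mul_sub, sum_sub_distrib]

lemma bernoulliExpect_const_mul (c : ℝ) :
    bernoulliExpect p R (fun s => c * f s) = c * bernoulliExpect p R f := by
  simp only [bernoulliExpect, mul_sum]
  exact sum_congr rfl fun _ _ => by ring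

lemma bernoulliExpect_sum {ι : Type*} (I : Finset ι) (X : ι → Finset V → ℝ) :
    bernoulliExpect p R (fun s => ∑ i ∈ I, X i s) = ∑ i ∈ I, bernoulliExpect p R (X i) := by
  simp only [bernoulliExpect, mul_sum]
  exact sum_comm

lemma bernoulliExpect_union [DecidableEq V] {T U : Finset V} (h : Disjoint T U)
    (f : Finset V → ℝ) :
    bernoulliExpect p (T ∪ U) f =
      bernoulliExpect p T (fun t => bernoulliExpect p U (fun u => f (t ∪ u))) := by
  simp only [bernoulliExpect, sum_powerset_union_of_disjoint h, mul_sum]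
  refine sum_congr rfl fun t ht => sum_congr rfl fun u hu => ?_
  rw [bernoulliWeight_union h (mem_powerset.1 ht) (mem_powerset.1 hu)]
  ring

lemma bernoulliExpect_eq_of_subset [DecidableEq V] {A : Finset V} (hA : A ⊆ R)
    (hf : ∀ s, f s = f (s ∩ A)) :
    bernoulliExpect p R f = bernoulliExpect p A f := by
  rw [← union_sdiff_of_subset hA, bernoulliExpect_union disjoint_sdiff]
  refine bernoulliExpect_congr fun t ht => ?_
  rw [← bernoulliExpect_const p (f t) (R \ A)]
  refine bernoulliExpect_congr fun u hu => ?_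
  rw [hf (t ∪ u), union_inter_eq_left_of_disjoint ht (disjoint_of_subset_left hu sdiff_disjoint)]

lemma bernoulliExpect_mul_of_disjoint [DecidableEq V] {A B : Finset V} (hA : A ⊆ R)
    (hB : B ⊆ R) (hAB : Disjoint A B) (hf : ∀ s, f s = f (s ∩ A)) (hg : ∀ s, g s = g (s ∩ B)) :
    bernoulliExpect p R (fun s => f s * g s) = bernoulliExpect p R f * bernoulliExpect p R g := by
  have hfg : ∀ s, f s * g s = f (s ∩ (A ∪ B)) * g (s ∩ (A ∪ B)) := fun s => by
    rw [hf (s ∩ _), hg (s ∩ _), inter_assoc, inter_assoc, union_inter_cancel_left,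
      union_inter_cancel_right, ← hf, ← hg]
  rw [bernoulliExpect_eq_of_subset (union_subset hA hB) hfg, bernoulliExpect_union hAB,
    bernoulliExpect_eq_of_subset hA hf, bernoulliExpect_eq_of_subset hB hg]
  calc _ = bernoulliExpect p A (fun t => bernoulliExpect p B g * f t) :=
        bernoulliExpect_congr fun t ht => by
          rw [mul_comm, ← bernoulliExpect_const_mul]
          refine bernoulliExpect_congr fun u hu => ?_
          rw [hf (t ∪ u), hg (t ∪ u),
            union_inter_eq_left_of_disjoint ht (disjoint_of_subset_left hu hAB.symm),
            union_inter_eq_right_of_disjoint (disjoint_of_subset_left ht hAB) hu]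
    _ = _ := by rw [bernoulliExpect_const_mul, mul_comm]

lemma bernoulliExpect_indicator_subset [DecidableEq V] {T : Finset V} (hT : T ⊆ R) :
    bernoulliExpect p R (fun s => if T ⊆ s then 1 else 0) = p ^ T.card := by
  rw [bernoulliExpect_eq_of_subset hT fun s => by simp only [subset_inter_iff, Subset.rfl, and_true],
    bernoulliExpect, sum_eq_single_of_mem T (mem_powerset_self T)]
  · simp [bernoulliWeight]
  · intro s hs hne
    rw [if_neg fun h => hne (Subset.antisymm (mem_powerset.1 hs) h), mul_zero]

lemma bernoulliExpect_indicator_subset_or_subset [DecidableEq V] {A B : Finset V} (hA : A ⊆ R)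
    (hB : B ⊆ R) (hAB : Disjoint A B) :
    bernoulliExpect p R (fun s => if A ⊆ s ∨ B ⊆ s then 1 else 0) =
      p ^ A.card + p ^ B.card - p ^ A.card * p ^ B.card := by
  have hor : (fun s => if A ⊆ s ∨ B ⊆ s then (1 : ℝ) else 0) =
      (fun s => if A ⊆ s then 1 else 0) + (fun s => if B ⊆ s then 1 else 0) -
        (fun s => (if A ⊆ s then 1 else 0) * (if B ⊆ s then 1 else 0)) := by
    ext s
    by_cases hAs : A ⊆ s <;> by_cases hBs : B ⊆ s <;> simp [hAs, hBs]
  have hdep : ∀ T s : Finset V, ((if T ⊆ s then 1 else 0) : ℝ) = if T ⊆ s ∩ T then 1 else 0 :=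
    fun T s => by simp only [subset_inter_iff, Subset.rfl, and_true]
  rw [hor, bernoulliExpect_sub, bernoulliExpect_add, bernoulliExpect_mul_of_disjoint hA hB hAB
    (hdep A) (hdep B), bernoulliExpect_indicator_subset hA, bernoulliExpect_indicator_subset hB]

lemma bernoulliExpect_covariance :
    bernoulliExpect p R (fun s => (f s - bernoulliExpect p R f) * (g s - bernoulliExpect p R g)) =
      bernoulliExpect p R (fun s => f s * g s) - bernoulliExpect p R f * bernoulliExpect p R g := by
  set a := bernoulliExpect p R f
  set b := bernoulliExpect p R g
  have hexp : (fun s => (f s - a) * (g s - b)) =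
      (fun s => f s * g s) - (fun s => a * g s) - (fun s => b * f s) + (fun _ => a * b) := by
    ext s
    simp only [Pi.add_apply, Pi.sub_apply]
    ring
  rw [hexp, bernoulliExpect_add, bernoulliExpect_sub, bernoulliExpect_sub,
    bernoulliExpect_const_mul, bernoulliExpect_const_mul, bernoulliExpect_const]
  ring

/-- Covariances vanish for disjoint `W i`, `W j` and are at most `1` otherwise. -/
theorem bernoulliExpect_sq_sum_sub_le [DecidableEq V] (hp0 : 0 ≤ p) (hp1 : p ≤ 1) {ι : Type*}
    (I : Finset ι) (X : ι → Finset V → ℝ) (W : ι → Finset V)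
    (hX0 : ∀ i s, 0 ≤ X i s) (hX1 : ∀ i s, X i s ≤ 1) (hWR : ∀ i ∈ I, W i ⊆ R)
    (hXW : ∀ i ∈ I, ∀ s, X i s = X i (s ∩ W i)) :
    bernoulliExpect p R (fun s => (∑ i ∈ I, X i s - ∑ i ∈ I, bernoulliExpect p R (X i)) ^ 2) ≤
      ∑ i ∈ I, (#{j ∈ I | ¬Disjoint (W i) (W j)} : ℝ) := by
  set μ := fun i => bernoulliExpect p R (X i)
  have hcov : ∀ i ∈ I, ∀ j ∈ I,
      bernoulliExpect p R (fun s => (X i s - μ i) * (X j s - μ j)) ≤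
        if ¬Disjoint (W i) (W j) then 1 else 0 := by
    intro i hi j hj
    rw [bernoulliExpect_covariance]
    by_cases hW : Disjoint (W i) (W j)
    · rw [if_neg (not_not.2 hW), bernoulliExpect_mul_of_disjoint (hWR i hi) (hWR j hj) hW
        (hXW i hi) (hXW j hj), sub_self]
    · rw [if_pos hW]
      have hXX : bernoulliExpect p R (fun s => X i s * X j s) ≤ 1 := by
        simpa [bernoulliExpect_const] using bernoulliExpect_mono (R := R) (g := fun _ => 1) hp0 hp1
          fun s _ => mul_le_one₀ (hX1 i s) (hX0 j s) (hX1 j s)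
      nlinarith [bernoulliExpect_nonneg (R := R) hp0 hp1 (hX0 i),
        bernoulliExpect_nonneg (R := R) hp0 hp1 (hX0 j)]
  have hsq : ∀ s, (∑ i ∈ I, X i s - ∑ i ∈ I, μ i) ^ 2 =
      ∑ i ∈ I, ∑ j ∈ I, (X i s - μ i) * (X j s - μ j) := fun s => by
    rw [← sum_sub_distrib, sq, sum_mul_sum]
  simp only [hsq, bernoulliExpect_sum]
  refine sum_le_sum fun i hi => ?_
  rw [card_filter, Nat.cast_sum]
  refine sum_le_sum fun j hj => (hcov i hi j hj).trans_eq ?_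
  split_ifs <;> simp

theorem one_sub_div_sq_le_bernoulliExpect_indicator (hp0 : 0 ≤ p) (hp1 : p ≤ 1)
    (X : Finset V → ℝ) {μ t Z : ℝ} (hZ : 0 < Z) (ht : t ≤ μ - Z) :
    1 - bernoulliExpect p R (fun s => (X s - μ) ^ 2) / Z ^ 2 ≤
      bernoulliExpect p R (fun s => if t ≤ X s then 1 else 0) := by
  have hZ2 : 0 < Z ^ 2 := by positivity
  have hlhs : 1 - bernoulliExpect p R (fun s => (X s - μ) ^ 2) / Z ^ 2 =
      bernoulliExpect p R ((fun _ => 1) - fun s => (Z ^ 2)⁻¹ * (X s - μ) ^ 2) := by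
    rw [bernoulliExpect_sub, bernoulliExpect_const, bernoulliExpect_const_mul, div_eq_inv_mul]
  rw [hlhs]
  refine bernoulliExpect_mono hp0 hp1 fun s _ => ?_
  simp only [Pi.sub_apply]
  split_ifs with hX
  · have := mul_nonneg (inv_nonneg.2 hZ2.le) (sq_nonneg (X s - μ))
    linarith
  · have hdev : Z ^ 2 ≤ (X s - μ) ^ 2 := by nlinarith
    rw [sub_nonpos, ← div_eq_inv_mul, one_le_div hZ2]
    exact hdev

end BernoulliSubset

section EdgeSets

variable {V : Type*} [DecidableEq V]

def edgeVerts (M : Finset (Sym2 V)) : Finset V := M.biUnion Sym2.toFinset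

lemma mem_edgeVerts {M : Finset (Sym2 V)} {v : V} : v ∈ edgeVerts M ↔ ∃ e ∈ M, v ∈ e := by
  simp [edgeVerts]

lemma card_edgeVerts_le (M : Finset (Sym2 V)) : #(edgeVerts M) ≤ 2 * #M := by
  refine card_biUnion_le.trans ?_
  rw [mul_comm, ← smul_eq_mul, ← sum_const]
  exact sum_le_sum fun e _ => by rw [Sym2.card_toFinset]; split_ifs <;> omega

lemma forall_mem_union_iff_toFinset_sdiff_subset {e : Sym2 V} {D s : Finset V} :
    (∀ v ∈ e, v ∈ D ∪ s) ↔ e.toFinset \ D ⊆ s := by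
  simp only [subset_iff, mem_sdiff, Sym2.mem_toFinset, mem_union, and_imp]
  exact forall₂_congr fun v _ => or_iff_not_imp_left

lemma card_filter_not_disjoint_le_sum {ι : Type*} [DecidableEq ι] (S : Finset V)
    (W : ι → Finset V) (I : Finset ι) :
    #{j ∈ I | ¬Disjoint S (W j)} ≤ ∑ v ∈ S, #{j ∈ I | v ∈ W j} := by
  refine (card_le_card fun j hj => ?_).trans card_biUnion_le
  obtain ⟨hjI, hSW⟩ := mem_filter.1 hj
  obtain ⟨v, hvS, hvW⟩ := not_disjoint_iff.1 hSW
  exact mem_biUnion.2 ⟨v, hvS, mem_filter.2 ⟨hjI, hvW⟩⟩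

noncomputable def spanIndicator (D : Finset V) (M : Finset (Sym2 V)) (s : Finset V) : ℝ :=
  if ∃ e ∈ M, ∀ v ∈ e, v ∈ D ∪ s then 1 else 0

lemma spanIndicator_nonneg (D : Finset V) (M : Finset (Sym2 V)) (s : Finset V) :
    0 ≤ spanIndicator D M s := by
  unfold spanIndicator
  split_ifs <;> norm_num

lemma spanIndicator_le_one (D : Finset V) (M : Finset (Sym2 V)) (s : Finset V) :
    spanIndicator D M s ≤ 1 := by
  unfold spanIndicator
  split_ifs <;> norm_num

lemma spanIndicator_inter_edgeVerts_sdiff (D : Finset V) (M : Finset (Sym2 V)) (s : Finset V) :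
    spanIndicator D M s = spanIndicator D M (s ∩ (edgeVerts M \ D)) := by
  refine if_congr (exists_congr fun e => and_congr_right fun he => forall₂_congr fun v hv => ?_)
    rfl rfl
  have : v ∈ edgeVerts M := mem_edgeVerts.2 ⟨e, he, hv⟩
  simp only [mem_union, mem_inter, mem_sdiff]
  tauto

end EdgeSets

lemma two_mul_sq_sub_pow_four_le {p x y : ℝ} (hx : p ^ 2 ≤ x) (hx1 : x ≤ 1) (hy : p ^ 2 ≤ y)
    (hy1 : y ≤ 1) : 2 * p ^ 2 - p ^ 4 ≤ x + y - x * y := by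
  nlinarith [mul_nonneg (sub_nonneg.2 hx) (sub_nonneg.2 hy1),
    mul_nonneg (sub_nonneg.2 hy) (sub_nonneg.2 (hx.trans hx1))]

lemma two_mul_sq_sub_pow_four_le_bernoulliExpect {V : Type*} [Fintype V] [DecidableEq V]
    {p : ℝ} (hp0 : 0 ≤ p) (hp1 : p ≤ 1) {M : Finset (Sym2 V)} (hM : IsMatching2 M)
    (D : Finset V) :
    2 * p ^ 2 - p ^ 4 ≤ bernoulliExpect p (univ \ D) (spanIndicator D M) := by
  obtain ⟨hcard, hmatch⟩ := hM
  obtain ⟨e₁, e₂, hne, rfl⟩ := card_eq_two.1 hcard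
  have hR : ∀ e : Sym2 V, e.toFinset \ D ⊆ univ \ D :=
    fun e => sdiff_subset_sdiff (subset_univ _) le_rfl
  have hpow : ∀ e : Sym2 V, p ^ 2 ≤ p ^ #(e.toFinset \ D) ∧ p ^ #(e.toFinset \ D) ≤ 1 := fun e =>
    ⟨pow_le_pow_of_le_one hp0 hp1 ((card_le_card sdiff_subset).trans
      (by rw [Sym2.card_toFinset]; split_ifs <;> omega)), pow_le_one₀ hp0 hp1⟩
  have hdisj : Disjoint (e₁.toFinset \ D) (e₂.toFinset \ D) := disjoint_left.2 fun v hv₁ hv₂ =>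
    hmatch e₁ (by simp) e₂ (by simp) hne v (Sym2.mem_toFinset.1 (mem_sdiff.1 hv₁).1)
      (Sym2.mem_toFinset.1 (mem_sdiff.1 hv₂).1)
  unfold spanIndicator
  simp only [exists_mem_insert, mem_singleton, exists_eq_left,
    forall_mem_union_iff_toFinset_sdiff_subset]
  rw [bernoulliExpect_indicator_subset_or_subset (hR e₁) (hR e₂) hdisj]
  exact two_mul_sq_sub_pow_four_le (hpow e₁).1 (hpow e₁).2 (hpow e₂).1 (hpow e₂).2

lemma SimpleGraph.card_filter_exists_mem_le_ncard_incidenceSet {V ι : Type*} [Finite V]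
    (G : SimpleGraph V) {F : ι → Finset (Sym2 V)} (hdisj : ∀ i j, i ≠ j → Disjoint (F i) (F j))
    (hF : ∀ i, (F i : Set (Sym2 V)) ⊆ G.edgeSet) (I : Finset ι) (v : V)
    [DecidablePred fun i => ∃ e ∈ F i, v ∈ e] :
    #{i ∈ I | ∃ e ∈ F i, v ∈ e} ≤ (G.incidenceSet v).ncard := by
  have : Nonempty (Sym2 V) := ⟨s(v, v)⟩
  choose! e he using fun i (hi : i ∈ {i ∈ I | ∃ e ∈ F i, v ∈ e}) => (mem_filter.1 hi).2
  rw [← Set.ncard_coe_finset]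
  refine Set.ncard_le_ncard_of_injOn e (fun i hi => ⟨hF i (he i hi).1, (he i hi).2⟩) ?_
  intro i hi j hj hij
  by_contra hne
  have hi' : e i ∈ F j := hij ▸ (he j hj).1
  exact Finset.disjoint_left.1 (hdisj i j hne) (he i hi).1 hi'

lemma SimpleGraph.card_filter_not_disjoint_edgeVerts_sdiff_le {V ι : Type*} [Finite V]
    [DecidableEq V] [DecidableEq ι] (G : SimpleGraph V) {F : ι → Finset (Sym2 V)}
    (hdisj : ∀ i j, i ≠ j → Disjoint (F i) (F j)) (hF : ∀ i, (F i : Set (Sym2 V)) ⊆ G.edgeSet)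
    (I : Finset ι) {D : Finset V} {δ : ℝ} (hδ : 0 ≤ δ)
    (hD : ∀ v ∉ D, ((G.incidenceSet v).ncard : ℝ) ≤ δ) (i : ι) :
    (#{j ∈ I | ¬Disjoint (edgeVerts (F i) \ D) (edgeVerts (F j) \ D)} : ℝ) ≤ 2 * #(F i) * δ :=
  calc _ ≤ ∑ v ∈ edgeVerts (F i) \ D, (#{j ∈ I | v ∈ edgeVerts (F j) \ D} : ℝ) := by
        exact_mod_cast card_filter_not_disjoint_le_sum _ _ _
    _ ≤ ∑ v ∈ edgeVerts (F i) \ D, δ := sum_le_sum fun v hv =>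
        (Nat.cast_le.2 ((card_le_card (monotone_filter_right _ fun j _ hj =>
          mem_edgeVerts.1 (mem_sdiff.1 hj).1)).trans
            (G.card_filter_exists_mem_le_ncard_incidenceSet hdisj hF I v))).trans
          (hD v (mem_sdiff.1 hv).2)
    _ ≤ 2 * #(F i) * δ := by
        rw [sum_const, nsmul_eq_mul]
        gcongr
        exact_mod_cast (card_le_card sdiff_subset).trans (card_edgeVerts_le _)

lemma SimpleGraph.bernoulliExpect_sq_sum_spanIndicator_sub_le {V ι : Type*} [Fintype V]
    [DecidableEq V] [DecidableEq ι] (G : SimpleGraph V) {F : ι → Finset (Sym2 V)}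
    (hdisj : ∀ i j, i ≠ j → Disjoint (F i) (F j)) (hF : ∀ i, (F i : Set (Sym2 V)) ⊆ G.edgeSet)
    {I : Finset ι} (hI : ∀ i ∈ I, #(F i) ≤ 2) {p : ℝ} (hp0 : 0 ≤ p) (hp1 : p ≤ 1)
    {D : Finset V} {δ : ℝ} (hδ : 0 ≤ δ) (hD : ∀ v ∉ D, ((G.incidenceSet v).ncard : ℝ) ≤ δ) :
    bernoulliExpect p (univ \ D) (fun s => (∑ i ∈ I, spanIndicator D (F i) s -
        ∑ i ∈ I, bernoulliExpect p (univ \ D) (spanIndicator D (F i))) ^ 2) ≤ #I * (4 * δ) := by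
  refine (bernoulliExpect_sq_sum_sub_le hp0 hp1 I (fun i => spanIndicator D (F i))
    (fun i => edgeVerts (F i) \ D) (fun i => spanIndicator_nonneg D (F i))
    (fun i => spanIndicator_le_one D (F i)) (fun i _ => sdiff_subset_sdiff (subset_univ _) le_rfl)
    (fun i _ => spanIndicator_inter_edgeVerts_sdiff D (F i))).trans ?_
  rw [← nsmul_eq_mul]
  refine sum_le_card_nsmul _ _ _ fun i hi =>
    (G.card_filter_not_disjoint_edgeVerts_sdiff_le hdisj hF I hδ hD i).trans ?_
  have : (#(F i) : ℝ) ≤ 2 := by exact_mod_cast hI i hi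
  nlinarith

lemma four_mul_div_sq_le_one_tenth {ε q N n : ℝ} (hε : 0 < ε) (hq : 7 / 16 ≤ q) (hN : 0 < N)
    (hnN : n / 40 ≤ N) :
    N * (4 * (ε ^ 2 / 10 ^ 6 * n)) / (ε * (N * q)) ^ 2 ≤ 1 / 10 := by
  rw [div_le_iff₀ (by positivity)]
  calc N * (4 * (ε ^ 2 / 10 ^ 6 * n)) = 4 / 10 ^ 6 * ε ^ 2 * N * n := by ring
    _ ≤ 4 / 10 ^ 6 * ε ^ 2 * N * (40 * N) := by gcongr; linarith
    _ ≤ 1 / 10 * ε ^ 2 * N ^ 2 * (7 / 16) ^ 2 := by nlinarith [sq_nonneg (ε * N)]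
    _ ≤ 1 / 10 * (ε * (N * q)) ^ 2 := by
        rw [mul_pow, mul_pow, ← mul_assoc, ← mul_assoc]
        gcongr

/-- Let `p ∈ [1/2, 1)` and `ε > 0`. Let `G` be a graph on `n` vertices with an
edge coloring `F = F_M ⊔ F_E` (size-2 matchings indexed by `IM`, single edges
indexed by `IMᶜ`), with `n/40 ≤ |F_M| ≤ n` and `|F_E| ≤ n`. Let `D` be the set
of heavy vertices (incident to at least `(ε²/10⁶)·n` colored edges, i.e. edges
of `G`), and let `S = D ∪ (V ∖ D)_p` be the random set including each vertex
outside `D` independently with probability `p`. Then for all large `n`, with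
probability at least `0.9` the number of classes of `F_M` having an edge with
both endpoints in `S` is at least `(1 − ε)·|F_M|·(2p² − p⁴)`.

The probability is expressed as the explicit sum, over subsets `s` of the
non-heavy vertices, of `p^{|s|}(1-p)^{|V∖D|-|s|}` times the indicator of the
event for `S = D ∪ s`. -/
theorem statement_14 (p ε : ℝ) (hp : 1 / 2 ≤ p) (hp1 : p < 1) (hε : 0 < ε) :
    ∃ n₀ : ℕ, ∀ n : ℕ, n₀ ≤ n →
      ∀ (G : SimpleGraph (Fin n)) (m : ℕ) (F : Fin m → Finset (Sym2 (Fin n)))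
        (IM : Finset (Fin m)),
        IsEdgeColoring G F →
        (∀ i ∈ IM, IsMatching2 (F i)) →
        (∀ i ∉ IM, (F i).card = 1) →
        (n : ℝ) / 40 ≤ (IM.card : ℝ) → (IM.card : ℝ) ≤ n →
        ((IMᶜ).card : ℝ) ≤ n →
        ∀ D : Finset (Fin n),
          D = (univ.filter fun v : Fin n =>
            (ε ^ 2 / 10 ^ 6) * n ≤ ({e ∈ G.edgeSet | v ∈ e}.ncard : ℝ)) →
        (0.9 : ℝ) ≤
          ∑ s ∈ (univ \ D).powerset,
            p ^ s.card * (1 - p) ^ ((univ \ D).card - s.card) *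
              (if (1 - ε) * (IM.card : ℝ) * (2 * p ^ 2 - p ^ 4) ≤
                  ((IM.filter fun i =>
                    ∃ e ∈ F i, ∀ v ∈ e, v ∈ D ∪ s).card : ℝ)
               then (1 : ℝ) else 0) := by
  refine ⟨1, fun n hn G m F IM hcol hM _ hlo _ _ D hD => ?_⟩
  obtain ⟨-, hdisj, hsub, -⟩ := hcol
  have hp0 : 0 ≤ p := by linarith
  set q := 2 * p ^ 2 - p ^ 4
  have hq : 7 / 16 ≤ q := by
    nlinarith [mul_nonneg (by nlinarith : (0 : ℝ) ≤ p ^ 2 - 1 / 4)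
      (by nlinarith : (0 : ℝ) ≤ 7 / 4 - p ^ 2)]
  have hlight : ∀ v ∉ D, ((G.incidenceSet v).ncard : ℝ) ≤ ε ^ 2 / 10 ^ 6 * n := fun v hv => by
    rw [hD, mem_filter] at hv
    exact (not_le.1 fun h => hv ⟨mem_univ v, h⟩).le
  have hvar := G.bernoulliExpect_sq_sum_spanIndicator_sub_le hdisj hsub
    (fun i hi => (hM i hi).1.le) hp0 hp1.le (by positivity) hlight
  have hμ : #IM * q ≤ ∑ i ∈ IM, bernoulliExpect p (univ \ D) (spanIndicator D (F i)) := by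
    rw [← nsmul_eq_mul]
    exact card_nsmul_le_sum _ _ _ fun i hi =>
      two_mul_sq_sub_pow_four_le_bernoulliExpect hp0 hp1.le (hM i hi) D
  have hIM : (0 : ℝ) < #IM := by
    have : (1 : ℝ) ≤ n := by exact_mod_cast hn
    linarith
  have hZ : 0 < ε * (#IM * q) := by positivity
  calc (0.9 : ℝ)
      ≤ 1 - bernoulliExpect p (univ \ D) (fun s => (∑ i ∈ IM, spanIndicator D (F i) s -
          ∑ i ∈ IM, bernoulliExpect p (univ \ D) (spanIndicator D (F i))) ^ 2) /
            (ε * (#IM * q)) ^ 2 := by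
        linarith [div_le_div_of_nonneg_right hvar (sq_nonneg (ε * (#IM * q))),
          four_mul_div_sq_le_one_tenth hε hq hIM hlo]
    _ ≤ bernoulliExpect p (univ \ D) (fun s =>
          if (1 - ε) * #IM * q ≤ ∑ i ∈ IM, spanIndicator D (F i) s then 1 else 0) :=
        one_sub_div_sq_le_bernoulliExpect_indicator hp0 hp1.le _ hZ (by linarith)
    _ = _ := by
        refine bernoulliExpect_congr fun s _ => ?_
        rw [card_filter]
        push_cast
        unfold spanIndicator
        congr!
end
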